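/- arXiv:2305.14132 — 7 statements merged into one kernel-verified Lean document; each statement's English description precedes it below -/
import Mathlib

section
/- For all integers q ≥ 2 and positive integers r, s with r > s, the set-coloring Ramsey number satisfies R(q+1; r, s) ≥ A_q(r, s) + 1. Equivalently, there exists an (r,s)-coloring of the complete graph on A_q(r,s) vertices containing no monochromatic copy of K_{q+1}. -/
open Finset

/-- `C` is a `q`-ary code of length `m` whose codewords have pairwise Hamming
distance at least the real number `d`. -/
def IsCode (q m : ℕ) (d : ℝ) (C : Finset (Fin m → Fin q)) : Prop :=
  ∀ x ∈ C, ∀ y ∈ C, x ≠ y → d ≤ (hammingDist x y : ℝ)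

/-- `A_q(m, d)`: the maximum size of a `q`-ary code of length `m` whose codewords
have pairwise Hamming distance at least the real number `d`. -/
noncomputable def maxCodeSize (q m : ℕ) (d : ℝ) : ℕ :=
  sSup {k : ℕ | ∃ C : Finset (Fin m → Fin q), IsCode q m d C ∧ C.card = k}

/-- `χ` is an `(r, s)`-coloring of the complete graph on `Fin N`: each edge receives
an `s`-element subset of a palette of `r` colors. -/
def IsSetColoring (N r s : ℕ) (χ : Fin N → Fin N → Finset (Fin r)) : Prop :=
  (∀ i j, χ i j = χ j i) ∧ ∀ i j : Fin N, i ≠ j → (χ i j).card = s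

/-- The set-coloring `χ` contains a monochromatic clique on `n` vertices: a set of `n`
vertices and a color contained in the color set of every edge between them. -/
def HasMonoClique {N r : ℕ} (χ : Fin N → Fin N → Finset (Fin r)) (n : ℕ) : Prop :=
  ∃ (S : Finset (Fin N)) (c : Fin r), S.card = n ∧
    ∀ i ∈ S, ∀ j ∈ S, i ≠ j → c ∈ χ i j

/-- The set-coloring Ramsey number `R(n; r, s)`: the minimum `N` such that every
`(r, s)`-coloring of the complete graph on `N` vertices contains a monochromatic
clique on `n` vertices. -/
noncomputable def setRamsey (n r s : ℕ) : ℕ :=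
  sInf {N : ℕ | ∀ χ : Fin N → Fin N → Finset (Fin r),
    IsSetColoring N r s χ → HasMonoClique χ n}

/-- Auxiliary: pick a subset of size `s` of `D` (if possible). -/
noncomputable def pickSub {α : Type*} (s : ℕ) (D : Finset α) : Finset α :=
  if h : s ≤ D.card then (Finset.exists_subset_card_eq h).choose else ∅

lemma pickSub_subset {α : Type*} {s : ℕ} {D : Finset α} (h : s ≤ D.card) :
    pickSub s D ⊆ D := by
  rw [pickSub, dif_pos h]
  exact (Finset.exists_subset_card_eq h).choose_spec.1

lemma pickSub_card {α : Type*} {s : ℕ} {D : Finset α} (h : s ≤ D.card) :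
    (pickSub s D).card = s := by
  rw [pickSub, dif_pos h]
  exact (Finset.exists_subset_card_eq h).choose_spec.2

/-- Greedy sequence lemma for the multicolor Ramsey theorem. -/
lemma seq_lemma {α : Type*} [DecidableEq α] {r : ℕ} (hr : 2 ≤ r) (f : α → α → Fin r) :
    ∀ (t : ℕ) (V : Finset α), r ^ t ≤ V.card →
    ∃ l : List (α × Fin r), l.length = t ∧ (∀ p ∈ l, p.1 ∈ V) ∧
      l.Pairwise (fun p p' => f p.1 p'.1 = p.2 ∧ p.1 ≠ p'.1) := by
  intro t
  induction t with
  | zero => exact fun V _ => ⟨[], rfl, by simp, List.Pairwise.nil⟩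
  | succ t ih =>
    intro V hV
    have hr0 : 0 < r := by omega
    obtain ⟨v, hv⟩ : V.Nonempty :=
      Finset.card_pos.mp (lt_of_lt_of_le (pow_pos hr0 _) hV)
    have hsum : (V.erase v).card =
        ∑ c : Fin r, ((V.erase v).filter (fun w => f v w = c)).card :=
      Finset.card_eq_sum_card_fiberwise (fun w _ => Finset.mem_univ (f v w))
    have hex : ∃ c : Fin r, r ^ t ≤ ((V.erase v).filter (fun w => f v w = c)).card := by
      by_contra hcon
      push_neg at hcon
      have hle : ∑ c : Fin r, ((V.erase v).filter (fun w => f v w = c)).card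
          ≤ r * (r ^ t - 1) := by
        calc ∑ c : Fin r, ((V.erase v).filter (fun w => f v w = c)).card
            ≤ ∑ _c : Fin r, (r ^ t - 1) :=
              Finset.sum_le_sum (fun c _ => Nat.le_sub_one_of_lt (hcon c))
          _ = r * (r ^ t - 1) := by simp [Finset.sum_const, mul_comm]
      have hcard : r ^ (t + 1) - 1 ≤ (V.erase v).card := by
        rw [Finset.card_erase_of_mem hv]; omega
      have h1 : 1 ≤ r ^ t := Nat.one_le_pow _ _ hr0
      have hpow : r ^ (t + 1) = r ^ t * r := pow_succ r t
      have hmul : r ^ t * r = r * (r ^ t - 1) + r := by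
        rw [mul_comm]
        have : r ^ t = (r ^ t - 1) + 1 := by omega
        rw [this, Nat.mul_add, mul_one, Nat.add_sub_cancel]
      rw [hsum] at hcard
      omega
    obtain ⟨c, hc⟩ := hex
    obtain ⟨l, hlen, hmem, hpair⟩ := ih _ hc
    refine ⟨(v, c) :: l, by simp [hlen], ?_, List.pairwise_cons.mpr ⟨?_, hpair⟩⟩
    · intro p hp
      rcases List.mem_cons.mp hp with h | h
      · rw [h]; exact hv
      · have := hmem p h
        rw [Finset.mem_filter, Finset.mem_erase] at this
        exact this.1.2
    · intro p hp
      have := hmem p hp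
      rw [Finset.mem_filter, Finset.mem_erase] at this
      exact ⟨this.2, fun h => this.1.1 h.symm⟩


lemma ramsey_set_nonempty (q r s : ℕ) (hr : 2 ≤ r) (hs : 0 < s) :
    ∀ χ : Fin (r ^ (r * q + 1)) → Fin (r ^ (r * q + 1)) → Finset (Fin r),
      IsSetColoring (r ^ (r * q + 1)) r s χ → HasMonoClique χ (q + 1) := by
  intro χ hχ
  obtain ⟨hsym, hcardχ⟩ := hχ
  have hr0 : 0 < r := by omega
  classical
  let f : Fin (r ^ (r * q + 1)) → Fin (r ^ (r * q + 1)) → Fin r := fun i j =>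
    if h : (χ i j).Nonempty then (χ i j).min' h else ⟨0, hr0⟩
  obtain ⟨l, hlen, -, hpair⟩ := seq_lemma hr f (r * q + 1) Finset.univ (by simp)
  have hnodup : l.Nodup :=
    hpair.imp (fun h heq => h.2 (congrArg Prod.fst heq))
  set T := l.toFinset with hT
  have hTcard : T.card = r * q + 1 := by rw [hT, List.toFinset_card_of_nodup hnodup, hlen]
  have hfib : T.card = ∑ c : Fin r, (T.filter (fun p => p.2 = c)).card :=
    Finset.card_eq_sum_card_fiberwise (fun p _ => Finset.mem_univ p.2)
  have hexc : ∃ c : Fin r, q + 1 ≤ (T.filter (fun p => p.2 = c)).card := by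
    by_contra h
    push_neg at h
    have hle : ∑ c : Fin r, (T.filter (fun p => p.2 = c)).card ≤ r * q := by
      calc ∑ c : Fin r, (T.filter (fun p => p.2 = c)).card
          ≤ ∑ _c : Fin r, q := Finset.sum_le_sum fun c _ => by
            have := h c; omega
        _ = r * q := by simp [Finset.sum_const, mul_comm]
    rw [← hfib, hTcard] at hle
    omega
  obtain ⟨c, hc⟩ := hexc
  -- symmetric closure of the pairwise relation
  have hforall : ∀ ⦃p⦄, p ∈ l → ∀ ⦃p' : Fin (r ^ (r * q + 1)) × Fin r⦄, p' ∈ l → p ≠ p' →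
      (f p.1 p'.1 = p.2 ∧ p.1 ≠ p'.1) ∨ (f p'.1 p.1 = p'.2 ∧ p'.1 ≠ p.1) := by
    refine @List.Pairwise.forall _ _ _ ⟨?_⟩ (hpair.imp fun h => Or.inl h)
    intro a b hab
    exact hab.symm
  have hinj : Set.InjOn Prod.fst ((T.filter (fun p => p.2 = c) : Finset (Fin (r ^ (r * q + 1)) × Fin r)) : Set (Fin (r ^ (r * q + 1)) × Fin r)) := by
    intro p hp p' hp' hpp
    by_contra hne
    rcases hforall (List.mem_toFinset.mp (Finset.mem_filter.mp hp).1)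
      (List.mem_toFinset.mp (Finset.mem_filter.mp hp').1) hne with h | h
    · exact h.2 hpp
    · exact h.2 hpp.symm
  have hS0 : q + 1 ≤ ((T.filter (fun p => p.2 = c)).image Prod.fst).card := by
    rw [Finset.card_image_of_injOn hinj]
    exact hc
  obtain ⟨S, hSsub, hScard⟩ := Finset.exists_subset_card_eq hS0
  refine ⟨S, c, hScard, ?_⟩
  intro i hi j hj hij
  obtain ⟨p, hp, hpi⟩ := Finset.mem_image.mp (hSsub hi)
  obtain ⟨p', hp', hpj⟩ := Finset.mem_image.mp (hSsub hj)
  have hpc : p.2 = c := (Finset.mem_filter.mp hp).2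
  have hpc' : p'.2 = c := (Finset.mem_filter.mp hp').2
  have hne : p ≠ p' := fun h => hij (by rw [← hpi, ← hpj, h])
  have hχij : (χ i j).Nonempty := Finset.card_pos.mp (by rw [hcardχ i j hij]; exact hs)
  have hχji : (χ j i).Nonempty := Finset.card_pos.mp
    (by rw [hcardχ j i (fun h => hij h.symm)]; exact hs)
  rcases hforall (List.mem_toFinset.mp (Finset.mem_filter.mp hp).1)
      (List.mem_toFinset.mp (Finset.mem_filter.mp hp').1) hne with h | h
  · have hf : f i j = c := by rw [← hpi, ← hpj] at *; rw [h.1, hpc]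
    have : f i j = (χ i j).min' hχij := dif_pos hχij
    rw [this] at hf
    rw [← hf]
    exact (χ i j).min'_mem hχij
  · have hf : f j i = c := by rw [← hpi, ← hpj] at *; rw [h.1, hpc']
    have : f j i = (χ j i).min' hχji := dif_pos hχji
    rw [this] at hf
    rw [hsym i j, ← hf]
    exact (χ j i).min'_mem hχji

/-- For all integers `q ≥ 2` and positive integers `r, s` with `r > s`, the
set-coloring Ramsey number satisfies `R(q+1; r, s) ≥ A_q(r, s) + 1`. -/
theorem ramsey_ge_code_add_one (q r s : ℕ) (hq : 2 ≤ q) (hr : 0 < r) (hs : 0 < s)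
    (hrs : s < r) :
    maxCodeSize q r (s : ℝ) + 1 ≤ setRamsey (q + 1) r s := by
  classical
  have hr2 : 2 ≤ r := by omega
  -- the max code size is attained
  have hKne : {k : ℕ | ∃ C : Finset (Fin r → Fin q), IsCode q r (s : ℝ) C ∧ C.card = k}.Nonempty :=
    ⟨0, ∅, fun x hx => (Finset.notMem_empty x hx).elim, Finset.card_empty⟩
  have hKbdd : BddAbove {k : ℕ | ∃ C : Finset (Fin r → Fin q), IsCode q r (s : ℝ) C ∧ C.card = k} := by
    refine ⟨q ^ r, ?_⟩
    rintro k ⟨C, -, hC⟩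
    rw [← hC]
    calc C.card ≤ (Finset.univ : Finset (Fin r → Fin q)).card := Finset.card_le_univ C
      _ = q ^ r := by simp [Fintype.card_fun]
  obtain ⟨C, hcode, hCcard⟩ := Nat.sSup_mem hKne hKbdd
  rw [maxCodeSize]
  refine le_csInf ⟨r ^ (r * q + 1), ramsey_set_nonempty q r s hr2 hs⟩ ?_
  intro M hM
  by_contra hcon
  push_neg at hcon
  have hMN : M ≤ C.card := by
    rw [hCcard]; omega
  -- the code-based coloring on `Fin M`
  let c : Fin M → (Fin r → Fin q) := fun i =>
    ((C.equivFin.symm ⟨i.1, lt_of_lt_of_le i.2 hMN⟩ : C) : Fin r → Fin q)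
  have hcC : ∀ i, c i ∈ C := fun i => (C.equivFin.symm _).2
  have hcinj : Function.Injective c := by
    intro i j h
    have h1 : C.equivFin.symm ⟨i.1, lt_of_lt_of_le i.2 hMN⟩
        = C.equivFin.symm ⟨j.1, lt_of_lt_of_le j.2 hMN⟩ := Subtype.coe_injective h
    have h2 := C.equivFin.symm.injective h1
    have h3 : (i : ℕ) = (j : ℕ) := congrArg (fun x : Fin C.card => (x : ℕ)) h2
    exact Fin.ext h3
  let D : Fin M → Fin M → Finset (Fin r) := fun i j =>
    Finset.univ.filter (fun k => c i k ≠ c j k)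
  have hD : ∀ i j : Fin M, i ≠ j → s ≤ (D i j).card := by
    intro i j hij
    have hne : c i ≠ c j := fun h => hij (hcinj h)
    have h1 : (s : ℝ) ≤ (hammingDist (c i) (c j) : ℝ) := hcode _ (hcC i) _ (hcC j) hne
    have h2 : s ≤ hammingDist (c i) (c j) := by exact_mod_cast h1
    simpa [hammingDist, D] using h2
  let χ : Fin M → Fin M → Finset (Fin r) := fun i j => pickSub s (D i j)
  have hDsym : ∀ i j, D i j = D j i := by
    intro i j
    refine Finset.filter_congr ?_
    intro k _
    exact ne_comm
  have hcol : IsSetColoring M r s χ := by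
    constructor
    · intro i j
      show pickSub s (D i j) = pickSub s (D j i)
      rw [hDsym]
    · intro i j hij
      exact pickSub_card (hD i j hij)
  obtain ⟨S, k, hScard, hmono⟩ := hM χ hcol
  have hinjOn : Set.InjOn (fun i => c i k) ↑S := by
    intro i hi j hj h
    by_contra hij
    have hk := hmono i hi j hj hij
    have hkD : k ∈ D i j := pickSub_subset (hD i j hij) hk
    exact (Finset.mem_filter.mp hkD).2 h
  have hle : S.card ≤ Fintype.card (Fin q) :=
    Finset.card_le_card_of_injOn (fun i => c i k)
      (fun i _ => Finset.mem_univ _) hinjOn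
  rw [hScard, Fintype.card_fin] at hle
  omega
end

section
/- For every prime power q and every positive integer k, there are infinitely many positive integers r (i.e., for every R₀ there exists r > R₀) such that for all real numbers j with (k−1)·√(r/q) ≤ j ≤ r, one has A_q(r, (1 − 1/q)·(r − j)) ≥ (r·q)^{k/2}, where A_q(r, d) for real d is the maximum size of a q-ary code of length r whose codewords have pairwise Hamming distance at least d. -/
open Finset

section AuxCode

lemma fiber_card_mul {G H : Type*} [AddCommGroup G] [AddCommGroup H] [Fintype G] [Fintype H]
    [DecidableEq G] [DecidableEq H] (f : G →+ H) (hf : Function.Surjective f) (h : H) :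
    (univ.filter fun g => f g = h).card * Fintype.card H = Fintype.card G := by
  have key : ∀ h' : H, (univ.filter fun g => f g = h').card
      = (univ.filter fun g => f g = h).card := by
    intro h'
    obtain ⟨g₀, hg₀⟩ := hf h'
    obtain ⟨g₁, hg₁⟩ := hf h
    apply Finset.card_bij (fun g _ => g - g₀ + g₁)
    · intro a ha
      simp only [mem_filter, mem_univ, true_and] at ha ⊢
      simp [ha, hg₀, hg₁]
    · intro a₁ _ a₂ _ heq
      have := congrArg (fun x => x - g₁ + g₀) heq
      simpa using this
    · intro b hb
      simp only [mem_filter, mem_univ, true_and] at hb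
      refine ⟨b - g₁ + g₀, ?_, by abel⟩
      simp [mem_filter, hb, hg₀, hg₁]
  have hcard : Fintype.card G = ∑ h' : H, (univ.filter fun g => f g = h').card := by
    rw [← Finset.card_univ]
    exact Finset.card_eq_sum_card_fiberwise (fun x _ => mem_univ _)
  rw [hcard, Finset.sum_congr rfl (fun h' _ => key h'), Finset.sum_const, Finset.card_univ,
    smul_eq_mul, mul_comm]

lemma linear_fiber_card {F : Type*} [Field F] [Fintype F] [DecidableEq F] {n : ℕ}
    (d : Fin n → F) (i₀ : Fin n) (hd : d i₀ ≠ 0) (e : F) :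
    (univ.filter fun v : Fin n → F => ∑ i, d i * v i = e).card * Fintype.card F
      = Fintype.card F ^ n := by
  have key : ∀ e' : F, ∑ i, d i * (Pi.single i₀ (e' / d i₀) : Fin n → F) i = e' := by
    intro e'
    rw [Finset.sum_eq_single i₀]
    · rw [Pi.single_eq_same, mul_div_cancel₀ _ hd]
    · intro b _ hb
      rw [Pi.single_eq_of_ne hb, mul_zero]
    · simp
  let f : (Fin n → F) →+ F :=
    { toFun := fun v => ∑ i, d i * v i
      map_zero' := by simp
      map_add' := fun x y => by simp [mul_add, Finset.sum_add_distrib] }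
  have hsurj : Function.Surjective f := by
    intro e'
    exact ⟨Pi.single i₀ (e' / d i₀), key e'⟩
  have h2 := fiber_card_mul f hsurj e
  have h3 : (univ.filter fun v : Fin n → F => ∑ i, d i * v i = e)
      = (univ.filter fun g => f g = e) := rfl
  rw [h3, h2, Fintype.card_fun, Fintype.card_fin]

/-- An affine map given by coefficients and a constant term. -/
noncomputable def aff {F : Type*} [Field F] {n : ℕ} (P : (Fin n → F) × F)
    (v : Fin n → F) : F :=
  (∑ i, P.1 i * v i) + P.2

lemma affine_agree_card {F : Type*} [Field F] [Fintype F] [DecidableEq F] {n : ℕ}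
    (P P' : (Fin n → F) × F) (hne : P ≠ P') :
    (univ.filter fun v : Fin n → F => aff P v = aff P' v).card * Fintype.card F
      ≤ Fintype.card F ^ n := by
  obtain ⟨l, c⟩ := P
  obtain ⟨l', c'⟩ := P'
  simp only [aff]
  by_cases hl : l = l'
  · subst hl
    have hc : c ≠ c' := by
      intro h; exact hne (by rw [h])
    have hemp : (univ.filter fun v : Fin n → F =>
        (∑ i, l i * v i) + c = (∑ i, l i * v i) + c') = ∅ := by
      apply Finset.filter_false_of_mem
      intro v _ h
      exact hc (add_left_cancel h)
    rw [hemp]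
    simp
  · obtain ⟨i₀, hi₀⟩ := Function.ne_iff.mp hl
    have hrw : (univ.filter fun v : Fin n → F =>
        (∑ i, l i * v i) + c = (∑ i, l' i * v i) + c')
        = (univ.filter fun v : Fin n → F => ∑ i, (l i - l' i) * v i = c' - c) := by
      apply Finset.filter_congr
      intro v _
      constructor
      · intro h
        simp only [sub_mul, Finset.sum_sub_distrib]
        linear_combination h
      · intro h
        simp only [sub_mul, Finset.sum_sub_distrib] at h
        linear_combination h
    rw [hrw, linear_fiber_card (fun i => l i - l' i) i₀ (sub_ne_zero.mpr hi₀) (c' - c)]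

lemma aff_diff_card {F : Type*} [Field F] [Fintype F] [DecidableEq F] {n : ℕ} (hn : 1 ≤ n)
    (P P' : (Fin n → F) × F) (hne : P ≠ P') :
    Fintype.card F ^ n - Fintype.card F ^ (n - 1)
      ≤ (univ.filter fun v : Fin n → F => ¬(aff P v = aff P' v)).card := by
  classical
  have hq1 : 1 ≤ Fintype.card F := Fintype.card_pos
  have h1 := affine_agree_card P P' hne
  have htot : (univ.filter fun v : Fin n → F => aff P v = aff P' v).card
      + (univ.filter fun v : Fin n → F => ¬(aff P v = aff P' v)).card
      = (univ : Finset (Fin n → F)).card :=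
    Finset.card_filter_add_card_filter_not _
  have huniv : (univ : Finset (Fin n → F)).card = Fintype.card F ^ n := by
    rw [Finset.card_univ, Fintype.card_fun, Fintype.card_fin]
  have h2 : Fintype.card F ^ n = Fintype.card F ^ (n - 1) * Fintype.card F := by
    rw [← pow_succ]
    congr 1
    omega
  have h3 : (univ.filter fun v : Fin n → F => aff P v = aff P' v).card
      ≤ Fintype.card F ^ (n - 1) := by
    apply Nat.le_of_mul_le_mul_right _ (show 0 < Fintype.card F by omega)
    rw [← h2]
    exact h1
  omega

noncomputable def rsPoly {K : Type*} [Semiring K] (k : ℕ) (a : Fin k → K) : Polynomial K :=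
  ∑ i : Fin k, Polynomial.monomial (i : ℕ) (a i)

lemma rsPoly_coeff {K : Type*} [Semiring K] (k : ℕ) (a : Fin k → K) (j : Fin k) :
    (rsPoly k a).coeff (j : ℕ) = a j := by
  rw [rsPoly, Polynomial.finset_sum_coeff]
  rw [Finset.sum_eq_single j]
  · simp
  · intro b _ hb
    rw [Polynomial.coeff_monomial, if_neg (by simpa [Fin.val_injective.eq_iff] using hb)]
  · simp

lemma rsPoly_natDegree_le {K : Type*} [Semiring K] (k : ℕ) (a : Fin k → K) :
    (rsPoly k a).natDegree ≤ k - 1 := by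
  apply Polynomial.natDegree_sum_le_of_forall_le
  intro i _
  exact le_trans (Polynomial.natDegree_monomial_le _) (by omega)

lemma eval_agree_card {K : Type*} [Field K] [Fintype K] [DecidableEq K] {k : ℕ}
    (a b : Fin k → K) (hab : a ≠ b) :
    (univ.filter fun α : K => (rsPoly k a).eval α = (rsPoly k b).eval α).card ≤ k - 1 := by
  set pd := rsPoly k a - rsPoly k b with hpd
  have hpd0 : pd ≠ 0 := by
    obtain ⟨j, hj⟩ := Function.ne_iff.mp hab
    intro h
    apply hj
    have := congrArg (fun p => Polynomial.coeff p (j : ℕ)) h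
    simpa [hpd, rsPoly_coeff, sub_eq_zero] using this
  have hsub : (univ.filter fun α : K => (rsPoly k a).eval α = (rsPoly k b).eval α)
      ⊆ pd.roots.toFinset := by
    intro α hα
    simp only [mem_filter, mem_univ, true_and] at hα
    rw [Multiset.mem_toFinset, Polynomial.mem_roots hpd0]
    simp [hpd, Polynomial.IsRoot, sub_eq_zero, hα]
  calc (univ.filter fun α : K => (rsPoly k a).eval α = (rsPoly k b).eval α).card
      ≤ pd.roots.toFinset.card := Finset.card_le_card hsub
    _ ≤ Multiset.card pd.roots := Multiset.toFinset_card_le _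
    _ ≤ pd.natDegree := Polynomial.card_roots' pd
    _ ≤ k - 1 := by
        have h1 := rsPoly_natDegree_le k a
        have h2 := rsPoly_natDegree_le k b
        exact le_trans (Polynomial.natDegree_sub_le _ _) (by omega)

/-- The codeword of the concatenated Reed–Solomon/Hadamard-type code. -/
noncomputable def cword {F K : Type*} [Field F] [Field K] {q r n k : ℕ}
    (e₁ : Fin r ≃ K × (Fin n → F)) (ι : K ≃ ((Fin n → F) × F)) (e₂ : Fin q ≃ F)
    (a : Fin k → K) : Fin r → Fin q :=
  fun i => e₂.symm (aff (ι ((rsPoly k a).eval (e₁ i).1)) (e₁ i).2)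

lemma cword_dist {F K : Type*} [Field F] [Field K] [Fintype F] [Fintype K]
    [DecidableEq F] [DecidableEq K] {q r n k : ℕ} (hn : 1 ≤ n)
    (e₁ : Fin r ≃ K × (Fin n → F)) (ι : K ≃ ((Fin n → F) × F)) (e₂ : Fin q ≃ F)
    (a b : Fin k → K) (hab : a ≠ b) :
    (Fintype.card K - (k - 1)) * (Fintype.card F ^ n - Fintype.card F ^ (n - 1))
      ≤ hammingDist (cword e₁ ι e₂ a) (cword e₁ ι e₂ b) := by
  classical
  have hstep1 : hammingDist (cword e₁ ι e₂ a) (cword e₁ ι e₂ b)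
      = (univ.filter fun t : K × (Fin n → F) =>
          ¬(aff (ι ((rsPoly k a).eval t.1)) t.2 = aff (ι ((rsPoly k b).eval t.1)) t.2)).card := by
    show (univ.filter fun i : Fin r => cword e₁ ι e₂ a i ≠ cword e₁ ι e₂ b i).card = _
    apply Finset.card_bij (fun i _ => e₁ i)
    · intro i hi
      rw [Finset.mem_filter] at hi ⊢
      simp only [mem_filter, mem_univ, true_and, cword] at hi ⊢
      exact fun h => hi (by rw [h])
    · intro i₁ _ i₂ _ h
      exact e₁.injective h
    · intro t ht
      refine ⟨e₁.symm t, ?_, by simp⟩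
      rw [Finset.mem_filter]
      simp only [mem_filter, mem_univ, true_and, cword, Equiv.apply_symm_apply] at ht ⊢
      intro h
      exact ht (e₂.symm.injective h)
  rw [hstep1]
  have hsplit : (univ.filter fun t : K × (Fin n → F) =>
      ¬(aff (ι ((rsPoly k a).eval t.1)) t.2 = aff (ι ((rsPoly k b).eval t.1)) t.2)).card
      = ∑ α : K, (univ.filter fun v : Fin n → F =>
          ¬(aff (ι ((rsPoly k a).eval α)) v = aff (ι ((rsPoly k b).eval α)) v)).card := by
    rw [Finset.card_filter, Fintype.sum_prod_type]
    exact Finset.sum_congr rfl fun α _ => (Finset.card_filter _ _).symm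
  rw [hsplit]
  set S : Finset K := univ.filter fun α : K =>
    ¬((rsPoly k a).eval α = (rsPoly k b).eval α) with hS
  have hScard : Fintype.card K - (k - 1) ≤ S.card := by
    have h1 := eval_agree_card a b hab
    have h2 : (univ.filter fun α : K => (rsPoly k a).eval α = (rsPoly k b).eval α).card
        + (univ.filter fun α : K => ¬((rsPoly k a).eval α = (rsPoly k b).eval α)).card
        = (univ : Finset K).card :=
      Finset.card_filter_add_card_filter_not _
    rw [Finset.card_univ] at h2
    rw [hS]
    omega
  calc (Fintype.card K - (k - 1)) * (Fintype.card F ^ n - Fintype.card F ^ (n - 1))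
      ≤ S.card * (Fintype.card F ^ n - Fintype.card F ^ (n - 1)) :=
        Nat.mul_le_mul_right _ hScard
    _ ≤ ∑ α ∈ S, (univ.filter fun v : Fin n → F =>
          ¬(aff (ι ((rsPoly k a).eval α)) v = aff (ι ((rsPoly k b).eval α)) v)).card := by
        rw [← smul_eq_mul]
        apply Finset.card_nsmul_le_sum
        intro α hα
        have hne : ι ((rsPoly k a).eval α) ≠ ι ((rsPoly k b).eval α) := by
          simp only [hS, mem_filter, mem_univ, true_and] at hα
          exact fun h => hα (ι.injective h)
        exact aff_diff_card hn _ _ hne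
    _ ≤ ∑ α : K, (univ.filter fun v : Fin n → F =>
          ¬(aff (ι ((rsPoly k a).eval α)) v = aff (ι ((rsPoly k b).eval α)) v)).card :=
        Finset.sum_le_sum_of_subset (Finset.subset_univ S)

end AuxCode

/-- For every prime power `q` and positive integer `k`, there are infinitely many `r`
such that for all reals `j` with `(k-1)√(r/q) ≤ j ≤ r`,
`A_q(r, (1 - 1/q)(r - j)) ≥ (r q)^(k/2)`. -/
theorem code_lower_bound (q k : ℕ) (hq : IsPrimePow q) (hk : 0 < k) :
    ∀ R₀ : ℕ, ∃ r : ℕ, R₀ < r ∧ ∀ j : ℝ,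
      ((k : ℝ) - 1) * Real.sqrt ((r : ℝ) / q) ≤ j → j ≤ (r : ℝ) →
      ((r : ℝ) * q) ^ ((k : ℝ) / 2) ≤
        (maxCodeSize q r ((1 - 1 / (q : ℝ)) * ((r : ℝ) - j)) : ℝ) := by
  classical
  have hq2 : 2 ≤ q := hq.two_le
  obtain ⟨p, e, hp, he, hpe⟩ := hq
  haveI : Fact p.Prime := ⟨hp.nat_prime⟩
  intro R₀
  refine ⟨q ^ (2 * (k + R₀ + 2) - 1), ?_, ?_⟩
  · calc R₀ < k + R₀ + 2 := by omega
    _ < 2 ^ (k + R₀ + 2) := Nat.lt_two_pow_self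
    _ ≤ 2 ^ (2 * (k + R₀ + 2) - 1) := Nat.pow_le_pow_right (by norm_num) (by omega)
    _ ≤ q ^ (2 * (k + R₀ + 2) - 1) := Nat.pow_le_pow_left hq2 _
  intro j hj hjr
  set m : ℕ := k + R₀ + 2 with hmdef
  have hm2 : 2 ≤ m := by omega
  have hkm : k ≤ q ^ m := by
    refine le_of_lt ?_
    calc k ≤ m := by omega
    _ < 2 ^ m := Nat.lt_two_pow_self
    _ ≤ q ^ m := Nat.pow_le_pow_left hq2 m
  set r : ℕ := q ^ (2 * m - 1) with hrdef
  -- the fields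
  letI F := GaloisField p e
  letI K := GaloisField p (e * m)
  letI : Fintype F := Fintype.ofFinite F
  letI : Fintype K := Fintype.ofFinite K
  have hcardF : Fintype.card F = q := by
    rw [← Nat.card_eq_fintype_card, GaloisField.card p e (by omega), hpe]
  have hcardK : Fintype.card K = q ^ m := by
    rw [← Nat.card_eq_fintype_card, GaloisField.card p (e * m) (by positivity), pow_mul, hpe]
  -- the equivalences
  have hexp1 : m + (m - 1) = 2 * m - 1 := by omega
  have hexp2 : (m - 1) + 1 = m := by omega
  have hcprod : Fintype.card (Fin r) = Fintype.card (K × (Fin (m - 1) → F)) := by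
    rw [Fintype.card_fin, Fintype.card_prod, Fintype.card_fun, Fintype.card_fin,
      hcardK, hcardF, ← pow_add, hexp1]
  have hciota : Fintype.card K = Fintype.card ((Fin (m - 1) → F) × F) := by
    rw [Fintype.card_prod, Fintype.card_fun, Fintype.card_fin, hcardK, hcardF,
      ← pow_succ, hexp2]
  let e₁ : Fin r ≃ K × (Fin (m - 1) → F) := Fintype.equivOfCardEq hcprod
  let ι : K ≃ ((Fin (m - 1) → F) × F) := Fintype.equivOfCardEq hciota
  let e₂ : Fin q ≃ F := Fintype.equivOfCardEq (by rw [Fintype.card_fin, hcardF])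
  -- the distance lower bound
  have hdist : ∀ a b : Fin k → K, a ≠ b →
      (q ^ m - (k - 1)) * (q ^ (m - 1) - q ^ (m - 2))
        ≤ hammingDist (cword e₁ ι e₂ a) (cword e₁ ι e₂ b) := by
    intro a b hab
    have := cword_dist (show 1 ≤ m - 1 by omega) e₁ ι e₂ a b hab
    rwa [hcardK, hcardF, show m - 1 - 1 = m - 2 from by omega] at this
  have hNpos : 0 < (q ^ m - (k - 1)) * (q ^ (m - 1) - q ^ (m - 2)) := by
    apply Nat.mul_pos
    · omega
    · have := Nat.pow_lt_pow_right (show 1 < q by omega) (show m - 2 < m - 1 by omega)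
      omega
  -- injectivity
  have hinj : Function.Injective (fun a : Fin k → K => cword e₁ ι e₂ a) := by
    intro a b hab
    by_contra hne
    have h1 := hdist a b hne
    have hab' : cword e₁ ι e₂ a = cword e₁ ι e₂ b := hab
    rw [hab', hammingDist_self] at h1
    omega
  -- the code
  set C : Finset (Fin r → Fin q) :=
    (univ : Finset (Fin k → K)).image (fun a => cword e₁ ι e₂ a) with hC
  have hCcard : C.card = (q ^ m) ^ k := by
    rw [hC, Finset.card_image_of_injective _ hinj, Finset.card_univ, Fintype.card_fun,
      Fintype.card_fin, hcardK]
  -- real preliminaries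
  have hqR : (2:ℝ) ≤ (q:ℝ) := by exact_mod_cast hq2
  have hq0 : (0:ℝ) < (q:ℝ) := by linarith
  have hrR : (r:ℝ) = (q:ℝ) ^ (2 * m - 1) := by rw [hrdef]; push_cast; ring
  have hsqrt : Real.sqrt ((r:ℝ) / q) = (q:ℝ) ^ (m - 1) := by
    have h1 : (r:ℝ) / q = ((q:ℝ) ^ (m - 1)) ^ 2 := by
      have x1 : (m - 1) * 2 + 1 = 2 * m - 1 := by omega
      rw [hrR, ← pow_mul, div_eq_iff (ne_of_gt hq0), ← pow_succ, x1]
    rw [h1, Real.sqrt_sq (by positivity)]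
  have hk1R : (0:ℝ) ≤ (k:ℝ) - 1 := by
    have : (1:ℝ) ≤ (k:ℝ) := by exact_mod_cast hk
    linarith
  have hjge : ((k:ℝ) - 1) * (q:ℝ) ^ (m - 1) ≤ j := by rwa [hsqrt] at hj
  -- the key identity
  have hNR : (((q ^ m - (k - 1)) * (q ^ (m - 1) - q ^ (m - 2)) : ℕ) : ℝ)
      = ((q:ℝ) ^ m - ((k:ℝ) - 1)) * ((q:ℝ) ^ (m - 1) - (q:ℝ) ^ (m - 2)) := by
    have hle1 : k - 1 ≤ q ^ m := by omega
    have hle2 : q ^ (m - 2) ≤ q ^ (m - 1) :=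
      Nat.pow_le_pow_right (by omega) (by omega)
    rw [Nat.cast_mul, Nat.cast_sub hle1, Nat.cast_sub hle2, Nat.cast_sub hk]
    push_cast
    ring
  have hkey : (1 - 1 / (q:ℝ)) * ((r:ℝ) - ((k:ℝ) - 1) * (q:ℝ) ^ (m - 1))
      = ((q:ℝ) ^ m - ((k:ℝ) - 1)) * ((q:ℝ) ^ (m - 1) - (q:ℝ) ^ (m - 2)) := by
    have x1 : m - 2 + 1 = m - 1 := by omega
    have x2 : m - 2 + 2 = m := by omega
    have x3 : m - 2 + (m - 2) + 3 = 2 * m - 1 := by omega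
    have e1 : (q:ℝ) ^ (m - 1) = (q:ℝ) ^ (m - 2) * q := by
      rw [← pow_succ, x1]
    have e2 : (q:ℝ) ^ m = (q:ℝ) ^ (m - 2) * q ^ 2 := by
      rw [← pow_add, x2]
    have e3 : (q:ℝ) ^ (2 * m - 1) = (q:ℝ) ^ (m - 2) * (q:ℝ) ^ (m - 2) * q ^ 3 := by
      rw [← pow_add, ← pow_add, x3]
    rw [hrR, e1, e2, e3]
    field_simp
  -- the code has the required minimum distance
  have hcode : IsCode q r ((1 - 1 / (q:ℝ)) * ((r:ℝ) - j)) C := by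
    intro x hx y hy hxy
    rw [hC, Finset.mem_image] at hx hy
    obtain ⟨a, _, rfl⟩ := hx
    obtain ⟨b, _, rfl⟩ := hy
    have hab : a ≠ b := fun h => hxy (by rw [h])
    have h1 := hdist a b hab
    have h2 : (((q ^ m - (k - 1)) * (q ^ (m - 1) - q ^ (m - 2)) : ℕ) : ℝ)
        ≤ (hammingDist (cword e₁ ι e₂ a) (cword e₁ ι e₂ b) : ℝ) := by exact_mod_cast h1
    refine le_trans ?_ h2
    rw [hNR, ← hkey]
    apply mul_le_mul_of_nonneg_left _ (by
      rw [sub_nonneg, div_le_one hq0]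
      linarith)
    linarith
  -- conclude via maxCodeSize
  have hmem : C.card ∈ {n : ℕ | ∃ C' : Finset (Fin r → Fin q),
      IsCode q r ((1 - 1 / (q:ℝ)) * ((r:ℝ) - j)) C' ∧ C'.card = n} := ⟨C, hcode, rfl⟩
  have hbdd : BddAbove {n : ℕ | ∃ C' : Finset (Fin r → Fin q),
      IsCode q r ((1 - 1 / (q:ℝ)) * ((r:ℝ) - j)) C' ∧ C'.card = n} := by
    refine ⟨Fintype.card (Fin r → Fin q), ?_⟩
    rintro n ⟨C', _, rfl⟩
    exact le_trans (Finset.card_le_univ C') (le_of_eq (Finset.card_univ))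
  have hsize : C.card ≤ maxCodeSize q r ((1 - 1 / (q:ℝ)) * ((r:ℝ) - j)) :=
    le_csSup hbdd hmem
  -- final computation
  have hfinal : ((r:ℝ) * q) ^ ((k:ℝ) / 2) = ((C.card : ℕ) : ℝ) := by
    have h1 : (r:ℝ) * q = ((q:ℝ) ^ m) ^ 2 := by
      have x1 : 2 * m - 1 + 1 = m * 2 := by omega
      rw [hrR, ← pow_succ, x1, pow_mul]
    rw [h1, hCcard]
    have hy : (0:ℝ) ≤ (q:ℝ) ^ m := by positivity
    rw [← Real.rpow_natCast ((q:ℝ) ^ m) 2, ← Real.rpow_mul hy]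
    have h2 : ((2:ℕ):ℝ) * ((k:ℝ) / 2) = ((k:ℕ):ℝ) := by push_cast; ring
    rw [h2, Real.rpow_natCast]
    push_cast
    ring
  rw [hfinal]
  exact_mod_cast hsize
end

section
/- For every integer s > 1, R(3; 2s, s) ≤ 4s + 1. Equivalently, every (2s, s)-coloring of the complete graph on 4s + 1 vertices contains a monochromatic triangle. -/
open Finset

section Helpers



lemma card_product_filter_rows {α β : Type*} (A : Finset α) (B : Finset β)
    (P : α → β → Prop) [∀ a b, Decidable (P a b)] :
    ((A ×ˢ B).filter fun p => P p.1 p.2).card = ∑ a ∈ A, (B.filter fun b => P a b).card := by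
  rw [Finset.card_filter, Finset.sum_product]
  simp only [Finset.card_filter]

lemma card_product_filter_cols {α β : Type*} (A : Finset α) (B : Finset β)
    (P : α → β → Prop) [∀ a b, Decidable (P a b)] :
    ((A ×ˢ B).filter fun p => P p.1 p.2).card = ∑ b ∈ B, (A.filter fun a => P a b).card := by
  rw [Finset.card_filter, Finset.sum_product, Finset.sum_comm]
  simp only [Finset.card_filter]

lemma mantel_ordered {V : Type*} [DecidableEq V] (A : Finset V) (R : V → V → Prop)
    [∀ a b, Decidable (R a b)]
    (hsym : ∀ x y, R x y → R y x)
    (hirr : ∀ x, ¬ R x x)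
    (htf : ∀ x ∈ A, ∀ y ∈ A, ∀ z ∈ A, x ≠ y → x ≠ z → y ≠ z →
      R x y → R x z → R y z → False) :
    2 * ((A ×ˢ A).filter fun p => R p.1 p.2).card ≤ A.card ^ 2 := by
  classical
  have hne : ∀ x y, R x y → x ≠ y := fun x y h heq => hirr y (heq ▸ h)
  set m := A.card with hm
  set d : V → ℕ := fun u => (A.filter fun w => R u w).card with hdd
  set E := ((A ×ˢ A).filter fun p => R p.1 p.2).card with hEE
  have hE1 : E = ∑ u ∈ A, d u := card_product_filter_rows A A R
  have hdeg : ∀ u ∈ A, ∀ w ∈ A, R u w → d u + d w ≤ m := by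
    intro u hu w hw hR
    have hdisj : Disjoint (A.filter fun z => R u z) (A.filter fun z => R w z) := by
      
      rw [Finset.disjoint_left]
      intro z hz1 hz2
      rw [Finset.mem_filter] at hz1 hz2
      exact htf u hu w hw z hz1.1 (hne u w hR) (hne u z hz1.2) (hne w z hz2.2) hR hz1.2 hz2.2
    calc d u + d w = ((A.filter fun z => R u z) ∪ (A.filter fun z => R w z)).card :=
          (Finset.card_union_of_disjoint hdisj).symm
      _ ≤ A.card := Finset.card_le_card
          (Finset.union_subset (Finset.filter_subset _ _) (Finset.filter_subset _ _))
  have hsum1 : ∑ p ∈ (A ×ˢ A).filter (fun p => R p.1 p.2), (d p.1 + d p.2) ≤ E * m := by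
    have h := Finset.sum_le_card_nsmul ((A ×ˢ A).filter fun p => R p.1 p.2)
      (fun p => d p.1 + d p.2) m ?_
    · simpa [smul_eq_mul] using h
    · intro p hp
      rw [Finset.mem_filter, Finset.mem_product] at hp
      exact hdeg p.1 hp.1.1 p.2 hp.1.2 hp.2
  have hsum2 : ∑ p ∈ (A ×ˢ A).filter (fun p => R p.1 p.2), (d p.1 + d p.2)
      = 2 * ∑ u ∈ A, d u * d u := by
    rw [Finset.sum_filter, Finset.sum_product]
    have hrow : ∀ u ∈ A, (∑ w ∈ A, if R u w then d u + d w else 0)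
        = d u * d u + ∑ w ∈ A, (if R u w then d w else 0) := by
      intro u hu
      rw [← Finset.sum_filter, ← Finset.sum_filter, Finset.sum_add_distrib,
        Finset.sum_const, smul_eq_mul, mul_comm]
    rw [Finset.sum_congr rfl hrow, Finset.sum_add_distrib]
    have h2 : ∑ u ∈ A, ∑ w ∈ A, (if R u w then d w else 0) = ∑ w ∈ A, d w * d w := by
      rw [Finset.sum_comm]
      refine Finset.sum_congr rfl fun w hw => ?_
      rw [← Finset.sum_filter, Finset.sum_const, smul_eq_mul]
      have hfc : A.filter (fun u => R u w) = A.filter (fun u => R w u) :=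
        Finset.filter_congr fun u _ => ⟨hsym u w, hsym w u⟩
      rw [hfc]

    rw [h2, two_mul]
  have hcauchy : (∑ u ∈ A, d u) ^ 2 ≤ m * ∑ u ∈ A, d u * d u := by
    have h := sq_sum_le_card_mul_sum_sq (s := A) (f := d)
    simpa [sq, hm] using h
  have h3 : 2 * (∑ u ∈ A, d u * d u) ≤ E * m := hsum2 ▸ hsum1
  have h4 : 2 * (E * E) ≤ m * (E * m) := by
    calc 2 * (E * E) = 2 * (∑ u ∈ A, d u) ^ 2 := by rw [← hE1]; ring
      _ ≤ 2 * (m * ∑ u ∈ A, d u * d u) := by gcongr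
      _ = m * (2 * ∑ u ∈ A, d u * d u) := by ring
      _ ≤ m * (E * m) := by gcongr
  rcases Nat.eq_zero_or_pos E with h0 | hpos
  · simp [h0]
  · have h5 : E * (2 * E) ≤ E * m ^ 2 := by
      calc E * (2 * E) = 2 * (E * E) := by ring
        _ ≤ m * (E * m) := h4
        _ = E * m ^ 2 := by ring
    exact Nat.le_of_mul_le_mul_left h5 hpos


end Helpers

/-- For all integers `s > 1`, `R(3; 2s, s) ≤ 4s + 1`. -/
theorem ramsey_three_two_s (s : ℕ) (hs : 1 < s) :
    setRamsey 3 (2 * s) s ≤ 4 * s + 1 := by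
  apply Nat.sInf_le
  simp only [Set.mem_setOf_eq]
  intro χ hχ
  classical
  obtain ⟨hsym, hcard⟩ := hχ
  by_contra hmono
  have noTri : ∀ (c : Fin (2*s)) (x y z : Fin (4*s+1)), x ≠ y → x ≠ z → y ≠ z →
      c ∈ χ x y → c ∈ χ x z → c ∈ χ y z → False := by
    intro c x y z hxy hxz hyz h1 h2 h3
    apply hmono
    refine ⟨{x, y, z}, c, ?_, ?_⟩
    · rw [Finset.card_insert_of_notMem (by simp [hxy, hxz]),
        Finset.card_insert_of_notMem (by simp [hyz]), Finset.card_singleton]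
    · intro i hi j hj hij
      simp only [Finset.mem_insert, Finset.mem_singleton] at hi hj
      rcases hi with rfl | rfl | rfl <;> rcases hj with rfl | rfl | rfl <;>
        first
          | exact absurd rfl hij
          | assumption
          | (rw [hsym]; assumption)
  have hvcard : ∀ v : Fin (4*s+1), (univ.filter fun u => v ≠ u).card = 4*s := by
    intro v
    rw [Finset.filter_ne, Finset.card_erase_of_mem (Finset.mem_univ v),
      Finset.card_univ, Fintype.card_fin]
    omega
  have sumd : ∀ v : Fin (4*s+1),
      ∑ c : Fin (2*s), (univ.filter fun u => v ≠ u ∧ c ∈ χ v u).card = 4*s*s := by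
    intro v
    have h1 : ∀ c : Fin (2*s), (univ.filter fun u => v ≠ u ∧ c ∈ χ v u).card
        = ∑ u : Fin (4*s+1), if v ≠ u ∧ c ∈ χ v u then 1 else 0 := by
      intro c; rw [Finset.card_filter]
    simp_rw [h1]
    rw [Finset.sum_comm]
    have h2 : ∀ u : Fin (4*s+1),
        (∑ c : Fin (2*s), if v ≠ u ∧ c ∈ χ v u then 1 else 0) = if v ≠ u then s else 0 := by
      intro u
      by_cases hvu : v ≠ u
      · have h4 : ∀ cc : Fin (2*s), (if v ≠ u ∧ cc ∈ χ v u then (1:ℕ) else 0)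
            = if cc ∈ χ v u then 1 else 0 := by
          intro cc; simp [hvu]
        simp only [h4]
        rw [if_pos hvu]
        have h3 : univ.filter (fun c : Fin (2*s) => c ∈ χ v u) = χ v u := by
          ext cc; simp
        rw [← Finset.card_filter, h3]
        exact hcard v u hvu
      · simp [hvu]
    rw [Finset.sum_congr rfl (fun u _ => h2 u), ← Finset.sum_filter,
      Finset.sum_const, smul_eq_mul, hvcard v]
  by_cases hbig : ∃ (v : Fin (4*s+1)) (c : Fin (2*s)),
      2*s + 1 ≤ (univ.filter fun u => v ≠ u ∧ c ∈ χ v u).card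
  · obtain ⟨v, c, hv⟩ := hbig
    obtain ⟨A, hAsub, hAcard⟩ := Finset.exists_subset_card_eq hv
    have hA : ∀ u ∈ A, v ≠ u ∧ c ∈ χ v u := fun u hu => (Finset.mem_filter.mp (hAsub hu)).2
    have hAc : ∀ u ∈ A, ∀ w ∈ A, u ≠ w → c ∉ χ u w := by
      intro u hu w hw huw hmem
      exact noTri c v u w (hA u hu).1 (hA w hw).1 huw (hA u hu).2 (hA w hw).2 hmem
    have hmantel : ∀ c' : Fin (2*s),
        2 * ((A ×ˢ A).filter fun p => p.1 ≠ p.2 ∧ c' ∈ χ p.1 p.2).card ≤ (2*s+1)^2 := by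
      intro c'
      rw [← hAcard]
      refine mantel_ordered A (fun x y => x ≠ y ∧ c' ∈ χ x y) ?_ ?_ ?_
      · rintro x y ⟨h1, h2⟩; exact ⟨h1.symm, (hsym x y) ▸ h2⟩
      · rintro x ⟨h1, _⟩; exact h1 rfl
      · intro x hx y hy z hz hxy hxz hyz h1 h2 h3
        exact noTri c' x y z hxy hxz hyz h1.2 h2.2 h3.2
    have hEc : ((A ×ˢ A).filter fun p => p.1 ≠ p.2 ∧ c ∈ χ p.1 p.2).card = 0 := by
      rw [Finset.card_eq_zero, Finset.filter_eq_empty_iff]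
      rintro p hp ⟨hne, hmem⟩
      rw [Finset.mem_product] at hp
      exact hAc p.1 hp.1 p.2 hp.2 hne hmem
    have hdiag : ((A ×ˢ A).filter fun p => ¬ p.1 ≠ p.2).card = 2*s+1 := by
      have him : ((A ×ˢ A).filter fun p => ¬ p.1 ≠ p.2) = A.image (fun a => (a, a)) := by
        ext p
        simp only [Finset.mem_filter, Finset.mem_product, Finset.mem_image, not_not]
        constructor
        · rintro ⟨⟨h1, h2⟩, h3⟩
          exact ⟨p.1, h1, Prod.ext rfl h3⟩
        · rintro ⟨a, ha, rfl⟩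
          exact ⟨⟨ha, ha⟩, rfl⟩
      rw [him, Finset.card_image_of_injective _ (fun a b h => (Prod.ext_iff.mp h).1), hAcard]
    have hF : ((A ×ˢ A).filter fun p => p.1 ≠ p.2).card + (2*s+1) = (2*s+1)*(2*s+1) := by
      have h := Finset.card_filter_add_card_filter_not
        (s := A ×ˢ A) (p := fun p => p.1 ≠ p.2)
      rw [hdiag, Finset.card_product, hAcard] at h
      exact h
    have htot : ∑ c' : Fin (2*s),
        ((A ×ˢ A).filter fun p => p.1 ≠ p.2 ∧ c' ∈ χ p.1 p.2).card
        = ((A ×ˢ A).filter fun p => p.1 ≠ p.2).card * s := by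
      have h1 : ∀ c' : Fin (2*s),
          ((A ×ˢ A).filter fun p => p.1 ≠ p.2 ∧ c' ∈ χ p.1 p.2).card
          = ∑ p ∈ A ×ˢ A, if p.1 ≠ p.2 ∧ c' ∈ χ p.1 p.2 then 1 else 0 := by
        intro c'; rw [Finset.card_filter]
      simp_rw [h1]
      rw [Finset.sum_comm]
      have h2 : ∀ p ∈ A ×ˢ A,
          (∑ c' : Fin (2*s), if p.1 ≠ p.2 ∧ c' ∈ χ p.1 p.2 then 1 else 0)
          = if p.1 ≠ p.2 then s else 0 := by
        intro p hp
        by_cases hne : p.1 ≠ p.2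
        · have h4 : ∀ cc : Fin (2*s), (if p.1 ≠ p.2 ∧ cc ∈ χ p.1 p.2 then (1:ℕ) else 0)
              = if cc ∈ χ p.1 p.2 then 1 else 0 := by
            intro cc; simp [hne]
          simp only [h4]
          rw [if_pos hne]
          have h3 : univ.filter (fun cc : Fin (2*s) => cc ∈ χ p.1 p.2) = χ p.1 p.2 := by
            ext cc; simp
          rw [← Finset.card_filter, h3]
          exact hcard p.1 p.2 hne
        · simp [hne]
      rw [Finset.sum_congr rfl h2, ← Finset.sum_filter, Finset.sum_const, smul_eq_mul]
    have hsplit : ∑ c' : Fin (2*s),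
        2 * ((A ×ˢ A).filter fun p => p.1 ≠ p.2 ∧ c' ∈ χ p.1 p.2).card
        ≤ (2*s - 1) * (2*s+1)^2 := by
      rw [← Finset.sum_erase_add _ _ (Finset.mem_univ c), hEc]
      simp only [Nat.mul_zero, Nat.add_zero]
      calc ∑ c' ∈ univ.erase c,
            2 * ((A ×ˢ A).filter fun p => p.1 ≠ p.2 ∧ c' ∈ χ p.1 p.2).card
          ≤ ∑ _c' ∈ (univ : Finset (Fin (2*s))).erase c, (2*s+1)^2 :=
            Finset.sum_le_sum (fun c' _ => hmantel c')
        _ = (2*s - 1) * (2*s+1)^2 := by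
            rw [Finset.sum_const, smul_eq_mul, Finset.card_erase_of_mem (Finset.mem_univ c),
              Finset.card_univ, Fintype.card_fin]
    rw [← Finset.mul_sum, htot] at hsplit
    -- hsplit : 2 * (F * s) ≤ (2*s-1) * (2*s+1)^2, hF : F + (2s+1) = (2s+1)*(2s+1)
    have hs2 : (1:ℤ) ≤ 2 * (s:ℤ) := by omega
    zify at hF
    zify [show (1:ℕ) ≤ 2*s by omega] at hsplit
    have hF2 : (((A ×ˢ A).filter fun p => p.1 ≠ p.2).card : ℤ) = 4*(s:ℤ)^2 + 2*s := by
      linear_combination hF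
    rw [hF2] at hsplit
    have hsZ : (2:ℤ) ≤ (s:ℤ) := by exact_mod_cast hs
    nlinarith [hsplit, hsZ]
  · push_neg at hbig
    have hreg : ∀ (cc : Fin (2*s)) (vv : Fin (4*s+1)),
        (univ.filter fun u => vv ≠ u ∧ cc ∈ χ vv u).card = 2*s := by
      intro cc vv
      by_contra hne
      have hlt : (univ.filter fun u => vv ≠ u ∧ cc ∈ χ vv u).card < 2*s :=
        lt_of_le_of_ne (by have := hbig vv cc; omega) hne
      have hstrict : ∑ c' : Fin (2*s), (univ.filter fun u => vv ≠ u ∧ c' ∈ χ vv u).card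
          < ∑ _c' : Fin (2*s), 2*s :=
        Finset.sum_lt_sum (fun c' _ => by have := hbig vv c'; omega)
          ⟨cc, Finset.mem_univ cc, hlt⟩
      rw [sumd vv, Finset.sum_const, Finset.card_univ, Fintype.card_fin, smul_eq_mul] at hstrict
      linarith [hstrict]
    have c : Fin (2*s) := ⟨0, by omega⟩
    have v : Fin (4*s+1) := ⟨0, by omega⟩
    obtain ⟨A, hAdef⟩ : ∃ A, A = univ.filter (fun u : Fin (4*s+1) => v ≠ u ∧ c ∈ χ v u) :=
      ⟨_, rfl⟩
    obtain ⟨M, hMdef⟩ : ∃ M, M = univ.filter (fun u : Fin (4*s+1) => v ≠ u ∧ c ∉ χ v u) :=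
      ⟨_, rfl⟩
    have hAmem : ∀ u, u ∈ A ↔ (v ≠ u ∧ c ∈ χ v u) := by
      intro u; rw [hAdef]; simp
    have hMmem : ∀ u, u ∈ M ↔ (v ≠ u ∧ c ∉ χ v u) := by
      intro u; rw [hMdef]; simp
    have hAcard : A.card = 2*s := by rw [hAdef]; exact hreg c v
    have hMcard : M.card = 2*s := by
      have h1 := Finset.card_filter_add_card_filter_not
        (s := univ.filter (fun u : Fin (4*s+1) => v ≠ u)) (p := fun u => c ∈ χ v u)
      rw [Finset.filter_filter, Finset.filter_filter, hvcard v] at h1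
      rw [hMdef]
      rw [hAdef] at hAcard
      omega
    have hb : ∀ u ∈ A, (M.filter fun w => u ≠ w ∧ c ∈ χ u w).card + 1 = 2*s := by
      intro u hu
      obtain ⟨hvu, hcvu⟩ := (hAmem u).mp hu
      have hvnot : v ∉ M.filter (fun w => u ≠ w ∧ c ∈ χ u w) := by
        intro hmem
        exact ((hMmem v).mp (Finset.mem_filter.mp hmem).1).1 rfl
      have hNu : univ.filter (fun w => u ≠ w ∧ c ∈ χ u w)
          = insert v (M.filter fun w => u ≠ w ∧ c ∈ χ u w) := by
        ext w
        simp only [Finset.mem_filter, Finset.mem_univ, true_and, Finset.mem_insert]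
        constructor
        · rintro ⟨huw, hcuw⟩
          by_cases hwv : w = v
          · exact Or.inl hwv
          · refine Or.inr ⟨(hMmem w).mpr ⟨fun h => hwv h.symm, fun hcvw => ?_⟩, huw, hcuw⟩
            exact noTri c v u w hvu (fun h => hwv h.symm) huw hcvu hcvw hcuw
        · rintro (rfl | ⟨hwM, hR⟩)
          · exact ⟨hvu.symm, by rw [hsym]; exact hcvu⟩
          · exact hR
      have hcA := hreg c u
      rw [hNu, Finset.card_insert_of_notMem hvnot] at hcA
      omega
    have hc2 : ∀ w ∈ M, (A.filter fun u => u ≠ w ∧ c ∈ χ u w).card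
        + (M.filter fun x => w ≠ x ∧ c ∈ χ w x).card = 2*s := by
      intro w hw
      obtain ⟨hvw, hcvw⟩ := (hMmem w).mp hw
      have hNw : univ.filter (fun x => w ≠ x ∧ c ∈ χ w x)
          = (A.filter fun u => u ≠ w ∧ c ∈ χ u w)
            ∪ (M.filter fun x => w ≠ x ∧ c ∈ χ w x) := by
        ext x
        simp only [Finset.mem_filter, Finset.mem_univ, true_and, Finset.mem_union]
        constructor
        · rintro ⟨hwx, hcwx⟩
          have hxv : x ≠ v := by
            rintro rfl
            exact hcvw (by rw [hsym]; exact hcwx)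
          by_cases hxA : c ∈ χ v x
          · left
            refine ⟨(hAmem x).mpr ⟨fun h => hxv h.symm, hxA⟩, fun h => hwx h.symm, ?_⟩
            rw [hsym x w]; exact hcwx
          · right
            exact ⟨(hMmem x).mpr ⟨fun h => hxv h.symm, hxA⟩, hwx, hcwx⟩
        · rintro (⟨hxA, hxw, hcxw⟩ | ⟨hxM, hR⟩)
          · exact ⟨fun h => hxw h.symm, by rw [hsym w x]; exact hcxw⟩
          · exact hR
      have hdisjAM : Disjoint A M := by
        rw [Finset.disjoint_left]
        intro a ha hb2
        exact ((hMmem a).mp hb2).2 ((hAmem a).mp ha).2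
      have hdisj : Disjoint (A.filter fun u => u ≠ w ∧ c ∈ χ u w)
          (M.filter fun x => w ≠ x ∧ c ∈ χ w x) :=
        hdisjAM.mono (Finset.filter_subset _ _) (Finset.filter_subset _ _)
      have hcW := hreg c w
      rw [hNw, Finset.card_union_of_disjoint hdisj] at hcW
      exact hcW
    have hrows := card_product_filter_rows A M (fun a b => a ≠ b ∧ c ∈ χ a b)
    have hcols := card_product_filter_cols A M (fun a b => a ≠ b ∧ c ∈ χ a b)
    have hP : ((A ×ˢ M).filter fun p => p.1 ≠ p.2 ∧ c ∈ χ p.1 p.2).card + 2*s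
        = 2*s*(2*s) := by
      have h1 : ∑ u ∈ A, ((M.filter fun w => u ≠ w ∧ c ∈ χ u w).card + 1)
          = ∑ _u ∈ A, 2*s :=
        Finset.sum_congr rfl (fun u hu => hb u hu)
      rw [Finset.sum_add_distrib, Finset.sum_const, Finset.sum_const, smul_eq_mul,
        smul_eq_mul, mul_one, hAcard] at h1
      rw [hrows]
      linarith [h1]
    have hfg : ∑ w ∈ M, ((A.filter fun u => u ≠ w ∧ c ∈ χ u w).card
        + (M.filter fun x => w ≠ x ∧ c ∈ χ w x).card) = 2*s*(2*s) := by
      rw [Finset.sum_congr rfl hc2, Finset.sum_const, smul_eq_mul, hMcard]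
    have hgsum : ∑ w ∈ M, (M.filter fun x => w ≠ x ∧ c ∈ χ w x).card = 2*s := by
      rw [Finset.sum_add_distrib, ← hcols] at hfg
      linarith [hP, hfg]
    have he : ∀ w ∈ M, ∀ w' ∈ M, w ≠ w' → c ∈ χ w w' →
        (A.filter fun u => u ≠ w ∧ c ∈ χ u w).card
        + (A.filter fun u => u ≠ w' ∧ c ∈ χ u w').card ≤ 2*s := by
      intro w hw w' hw' hww' hcww'
      have hdisj : Disjoint (A.filter fun u => u ≠ w ∧ c ∈ χ u w)
          (A.filter fun u => u ≠ w' ∧ c ∈ χ u w') := by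
        rw [Finset.disjoint_left]
        intro u hu1 hu2
        rw [Finset.mem_filter] at hu1 hu2
        exact noTri c u w w' hu1.2.1 hu2.2.1 hww' hu1.2.2 hu2.2.2 hcww'
      calc (A.filter fun u => u ≠ w ∧ c ∈ χ u w).card
            + (A.filter fun u => u ≠ w' ∧ c ∈ χ u w').card
          = ((A.filter fun u => u ≠ w ∧ c ∈ χ u w)
            ∪ (A.filter fun u => u ≠ w' ∧ c ∈ χ u w')).card :=
            (Finset.card_union_of_disjoint hdisj).symm
        _ ≤ A.card := Finset.card_le_card
            (Finset.union_subset (Finset.filter_subset _ _) (Finset.filter_subset _ _))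
        _ = 2*s := hAcard
    have hg1 : ∀ w ∈ M, (M.filter fun x => w ≠ x ∧ c ∈ χ w x).card ≤ 1 := by
      intro w hw
      by_contra hcon
      push_neg at hcon
      have hwT : w ∉ M.filter (fun x => w ≠ x ∧ c ∈ χ w x) := by
        intro hmem
        exact (Finset.mem_filter.mp hmem).2.1 rfl
      have hsub : insert w (M.filter fun x => w ≠ x ∧ c ∈ χ w x) ⊆ M := by
        intro x hx
        rcases Finset.mem_insert.mp hx with rfl | hx
        · exact hw
        · exact (Finset.mem_filter.mp hx).1
      have hsum_le : ∑ x ∈ insert w (M.filter fun x => w ≠ x ∧ c ∈ χ w x),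
          (M.filter fun y => x ≠ y ∧ c ∈ χ x y).card ≤ 2*s := by
        exact le_trans (Finset.sum_le_sum_of_subset hsub) (le_of_eq hgsum)
      rw [Finset.sum_insert hwT] at hsum_le
      have hTle : ∀ w' ∈ M.filter (fun x => w ≠ x ∧ c ∈ χ w x),
          (A.filter fun u => u ≠ w ∧ c ∈ χ u w).card
          ≤ (M.filter fun y => w' ≠ y ∧ c ∈ χ w' y).card := by
        intro w' hw'
        rw [Finset.mem_filter] at hw'
        have h1 := he w hw w' hw'.1 hw'.2.1 hw'.2.2
        have h2 := hc2 w' hw'.1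
        omega
      have hTsum : (M.filter fun x => w ≠ x ∧ c ∈ χ w x).card
          * (A.filter fun u => u ≠ w ∧ c ∈ χ u w).card
          ≤ ∑ x ∈ M.filter (fun x => w ≠ x ∧ c ∈ χ w x),
            (M.filter fun y => x ≠ y ∧ c ∈ χ x y).card := by
        have h := Finset.card_nsmul_le_sum (M.filter (fun x => w ≠ x ∧ c ∈ χ w x))
          (fun x => (M.filter fun y => x ≠ y ∧ c ∈ χ x y).card)
          ((A.filter fun u => u ≠ w ∧ c ∈ χ u w).card) hTle
        simpa [smul_eq_mul] using h
      have hfgw := hc2 w hw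
      have hTsubM : (M.filter fun x => w ≠ x ∧ c ∈ χ w x) ⊆ M.erase w := by
        intro x hx
        rw [Finset.mem_erase]
        exact ⟨fun h => hwT (h ▸ hx), (Finset.mem_filter.mp hx).1⟩
      have hTcard : (M.filter fun x => w ≠ x ∧ c ∈ χ w x).card + 1 ≤ 2*s := by
        have h := Finset.card_le_card hTsubM
        rw [Finset.card_erase_of_mem hw, hMcard] at h
        omega
      have h6 : 2 * (A.filter fun u => u ≠ w ∧ c ∈ χ u w).card
          ≤ (M.filter fun x => w ≠ x ∧ c ∈ χ w x).card
            * (A.filter fun u => u ≠ w ∧ c ∈ χ u w).card :=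
        Nat.mul_le_mul_right _ hcon
      linarith [hsum_le, hTsum, hfgw, hTcard, h6]
    have hex : ∃ w ∈ M, (M.filter fun x => w ≠ x ∧ c ∈ χ w x).card ≠ 0 := by
      by_contra hall
      push_neg at hall
      have h0 : ∑ w ∈ M, (M.filter fun x => w ≠ x ∧ c ∈ χ w x).card = 0 :=
        Finset.sum_eq_zero hall
      omega
    obtain ⟨w, hw, hne0⟩ := hex
    obtain ⟨w', hw'⟩ := Finset.card_pos.mp (Nat.pos_of_ne_zero hne0)
    rw [Finset.mem_filter] at hw'
    obtain ⟨hw'M, hww', hcww'⟩ := hw'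
    have h1 := hg1 w hw
    have h2 := hg1 w' hw'M
    have h3 := he w hw w' hw'M hww' hcww'
    have h4 := hc2 w hw
    have h5 := hc2 w' hw'M
    omega
end

section
/- For all positive integers r, s with s < r < 2s, one has R(3; r, s) ≤ 2s/(2s − r) + 1. Equivalently, every (r, s)-coloring of the complete graph on N vertices with N > 2s/(2s − r) contains a monochromatic triangle. -/
open Finset

lemma key_arith (r s : ℕ) :
    ∀ N : ℕ, 2 * (N * (s * (N - 1)) ^ 2) ≤ r * (N * ((N - 1) * (s * N))) →
      2 * s * (N - 1) ≤ r * N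
  | 0, _ => by simp
  | 1, _ => by simp
  | (M + 2), htotal => by
    have e : M + 2 - 1 = M + 1 := rfl
    rw [e] at htotal ⊢
    have hpos : 0 < (M + 1) * (M + 2) := by positivity
    rcases Nat.eq_zero_or_pos s with rfl | hs
    · simp
    have hpos2 : 0 < s * ((M + 1) * (M + 2)) := Nat.mul_pos hs hpos
    refine Nat.le_of_mul_le_mul_right ?_ hpos2
    have hL : 2 * s * (M + 1) * (s * ((M + 1) * (M + 2)))
        = 2 * ((M + 2) * (s * (M + 1)) ^ 2) := by ring
    have hR : r * (M + 2) * (s * ((M + 1) * (M + 2)))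
        = r * ((M + 2) * ((M + 1) * (s * (M + 2)))) := by ring
    rw [hL, hR]
    exact htotal

lemma key_count (r s N : ℕ) (hs : 0 < s) (χ : Fin N → Fin N → Finset (Fin r))
    (hχ : IsSetColoring N r s χ) (hno : ¬ HasMonoClique χ 3) :
    2 * s * (N - 1) ≤ r * N := by
  obtain ⟨hsymm, hcard⟩ := hχ
  set E : Fin N → Finset (Fin N) := fun i => univ.filter (fun j => j ≠ i) with hE
  set d : Fin N → Fin r → ℕ := fun i c => #((E i).filter fun j => c ∈ χ i j) with hd
  have hEcard : ∀ i, #(E i) = N - 1 := by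
    intro i
    have he : E i = univ.erase i := Finset.filter_ne' univ i
    rw [he, Finset.card_erase_of_mem (mem_univ i), Finset.card_univ, Fintype.card_fin]
  -- row sums
  have h1 : ∀ i, ∑ c, d i c = s * (N - 1) := by
    intro i
    have hstep : ∀ c, d i c = ∑ j ∈ E i, (if c ∈ χ i j then 1 else 0) := by
      intro c; exact Finset.card_filter _ _
    simp_rw [hstep]
    rw [Finset.sum_comm]
    have hstep2 : ∀ j ∈ E i, (∑ c, if c ∈ χ i j then 1 else 0) = s := by
      intro j hj
      have hji : j ≠ i := by simpa [hE] using hj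
      rw [Finset.sum_boole]
      simp only [Finset.filter_univ_mem]
      simp [hcard i j (Ne.symm hji)]
    rw [Finset.sum_congr rfl hstep2, Finset.sum_const, hEcard, smul_eq_mul, mul_comm]
  -- disjointness from no mono triangle
  have hdisj : ∀ i j : Fin N, i ≠ j → ∀ c ∈ χ i j, d i c + d j c ≤ N := by
    intro i j hij c hc
    have hdis : Disjoint ((E i).filter fun k => c ∈ χ i k)
        ((E j).filter fun k => c ∈ χ j k) := by
      rw [Finset.disjoint_left]
      intro k hk1 hk2
      simp only [hE, Finset.mem_filter, Finset.mem_univ, true_and] at hk1 hk2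
      obtain ⟨hki, hcik⟩ := hk1
      obtain ⟨hkj, hcjk⟩ := hk2
      apply hno
      refine ⟨{i, j, k}, c, ?_, ?_⟩
      · rw [Finset.card_insert_of_notMem, Finset.card_insert_of_notMem] <;>
          simp [hij, Ne.symm hki, Ne.symm hkj]
      · intro a ha b hb hab
        simp only [Finset.mem_insert, Finset.mem_singleton] at ha hb
        rcases ha with rfl | rfl | rfl <;> rcases hb with rfl | rfl | rfl <;>
          first
            | exact absurd rfl hab
            | assumption
            | (rw [hsymm]; assumption)
            | (exact absurd rfl (Ne.symm hab))
    calc d i c + d j c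
        = #(((E i).filter fun k => c ∈ χ i k) ∪ ((E j).filter fun k => c ∈ χ j k)) :=
          (Finset.card_union_of_disjoint hdis).symm
      _ ≤ #(univ : Finset (Fin N)) := Finset.card_le_card (Finset.subset_univ _)
      _ = N := by rw [Finset.card_univ, Fintype.card_fin]
  -- rewriting the inner double sums as sums of squares
  have hB1 : ∀ i, ∑ j ∈ E i, ∑ c ∈ χ i j, d i c = ∑ c, d i c ^ 2 := by
    intro i
    have step : ∀ j ∈ E i, ∑ c ∈ χ i j, d i c = ∑ c, if c ∈ χ i j then d i c else 0 := by
      intro j _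
      rw [Finset.sum_ite_mem, Finset.univ_inter]
    rw [Finset.sum_congr rfl step, Finset.sum_comm]
    refine Finset.sum_congr rfl fun c _ => ?_
    rw [← Finset.sum_filter, Finset.sum_const, smul_eq_mul, sq]
  have hB2 : (∑ i, ∑ j ∈ E i, ∑ c ∈ χ i j, (d i c + d j c))
      = 2 * ∑ i, ∑ c, d i c ^ 2 := by
    have split : (∑ i, ∑ j ∈ E i, ∑ c ∈ χ i j, (d i c + d j c))
        = (∑ i, ∑ j ∈ E i, ∑ c ∈ χ i j, d i c)
          + ∑ i, ∑ j ∈ E i, ∑ c ∈ χ i j, d j c := by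
      simp_rw [Finset.sum_add_distrib]
    have swap : (∑ i, ∑ j ∈ E i, ∑ c ∈ χ i j, d j c)
        = ∑ i, ∑ j ∈ E i, ∑ c ∈ χ i j, d i c := by
      simp_rw [hE, Finset.sum_filter]
      rw [Finset.sum_comm]
      refine Finset.sum_congr rfl fun i _ => Finset.sum_congr rfl fun j _ => ?_
      by_cases hij : i ≠ j
      · rw [if_pos (Ne.symm hij), if_pos hij, hsymm j i]
      · push_neg at hij
        subst hij
        simp
    have inner : (∑ i, ∑ j ∈ E i, ∑ c ∈ χ i j, d i c) = ∑ i, ∑ c, d i c ^ 2 :=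
      Finset.sum_congr rfl fun i _ => hB1 i
    rw [split, swap, inner, two_mul]
  -- upper bound on the double sum
  have hBle : (∑ i, ∑ j ∈ E i, ∑ c ∈ χ i j, (d i c + d j c))
      ≤ N * ((N - 1) * (s * N)) := by
    calc (∑ i, ∑ j ∈ E i, ∑ c ∈ χ i j, (d i c + d j c))
        ≤ ∑ i : Fin N, ∑ j ∈ E i, (s * N) := by
          refine Finset.sum_le_sum fun i _ => Finset.sum_le_sum fun j hj => ?_
          have hji : j ≠ i := by simpa [hE] using hj
          calc (∑ c ∈ χ i j, (d i c + d j c)) ≤ ∑ c ∈ χ i j, N :=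
                Finset.sum_le_sum fun c hc => hdisj i j (Ne.symm hji) c hc
            _ = s * N := by rw [Finset.sum_const, smul_eq_mul, hcard i j (Ne.symm hji)]
      _ = N * ((N - 1) * (s * N)) := by
          simp_rw [Finset.sum_const, hEcard, smul_eq_mul]
          rw [Finset.sum_const, smul_eq_mul, Finset.card_univ, Fintype.card_fin]
  -- Cauchy–Schwarz per vertex, summed
  have hCS : N * (s * (N - 1)) ^ 2 ≤ r * ∑ i, ∑ c, d i c ^ 2 := by
    have per : ∀ i : Fin N, (s * (N - 1)) ^ 2 ≤ r * ∑ c, d i c ^ 2 := by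
      intro i
      have := sq_sum_le_card_mul_sum_sq (s := (univ : Finset (Fin r))) (f := d i)
      rwa [h1 i, Finset.card_univ, Fintype.card_fin] at this
    calc N * (s * (N - 1)) ^ 2 = ∑ _i : Fin N, (s * (N - 1)) ^ 2 := by
          rw [Finset.sum_const, smul_eq_mul, Finset.card_univ, Fintype.card_fin]
      _ ≤ ∑ i, r * ∑ c, d i c ^ 2 := Finset.sum_le_sum fun i _ => per i
      _ = r * ∑ i, ∑ c, d i c ^ 2 := by rw [Finset.mul_sum]
  -- combine
  have htotal : 2 * (N * (s * (N - 1)) ^ 2) ≤ r * (N * ((N - 1) * (s * N))) := by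
    calc 2 * (N * (s * (N - 1)) ^ 2) ≤ 2 * (r * ∑ i, ∑ c, d i c ^ 2) := by
          exact Nat.mul_le_mul_left 2 hCS
      _ = r * (2 * ∑ i, ∑ c, d i c ^ 2) := by ring
      _ = r * (∑ i, ∑ j ∈ E i, ∑ c ∈ χ i j, (d i c + d j c)) := by rw [hB2]
      _ ≤ r * (N * ((N - 1) * (s * N))) := Nat.mul_le_mul_left r hBle
  exact key_arith r s N htotal

/-- For all positive integers `r, s` with `s < r < 2s`,
`R(3; r, s) ≤ 2s/(2s - r) + 1`. -/
theorem ramsey_three_easy (r s : ℕ) (hs : 0 < s) (hsr : s < r) (hr : r < 2 * s) :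
    (setRamsey 3 r s : ℝ) ≤ 2 * s / (2 * s - r) + 1 := by
  set d0 := 2 * s - r with hd0
  have hd0pos : 0 < d0 := by omega
  set q := (2 * s) / d0 with hq
  have hmem : (q + 1) ∈ {N : ℕ | ∀ χ : Fin N → Fin N → Finset (Fin r),
      IsSetColoring N r s χ → HasMonoClique χ 3} := by
    intro χ hχ
    by_contra hno
    have hkey := key_count r s (q + 1) hs χ hχ hno
    simp only [Nat.add_sub_cancel] at hkey
    -- hkey : 2 * s * q ≤ r * (q + 1)
    have h5 : d0 * q ≤ r := by
      have hexp : r * (q + 1) = r * q + r := by ring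
      rw [hexp] at hkey
      have hsub : d0 * q = 2 * s * q - r * q := by
        rw [hd0, Nat.sub_mul]
      omega
    obtain ⟨m, hm1, hm2⟩ : ∃ m, 2 * s = d0 * q + m ∧ m < d0 :=
      ⟨(2 * s) % d0, by rw [hq, Nat.div_add_mod], Nat.mod_lt _ hd0pos⟩
    omega
  have hle : setRamsey 3 r s ≤ q + 1 := Nat.sInf_le hmem
  have hcast : ((q : ℝ)) ≤ 2 * s / (2 * s - r) := by
    have h1 : ((q : ℝ)) ≤ (2 * s : ℕ) / (d0 : ℝ) := by
      rw [hq]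
      exact Nat.cast_div_le
    have h2 : ((d0 : ℝ)) = 2 * s - r := by
      rw [hd0]
      push_cast [Nat.cast_sub hr.le]
      ring
    rw [h2] at h1
    calc ((q : ℝ)) ≤ (2 * s : ℕ) / (2 * (s:ℝ) - r) := h1
      _ = 2 * s / (2 * s - r) := by push_cast; ring
  calc (setRamsey 3 r s : ℝ) ≤ ((q + 1 : ℕ) : ℝ) := by exact_mod_cast hle
    _ = (q : ℝ) + 1 := by push_cast; ring
    _ ≤ 2 * s / (2 * s - r) + 1 := by linarith
end

section
/- For every integer s ≥ 2, R(3; 2s − 1, s) ≤ 2s + 1. Equivalently, every (2s−1, s)-coloring of the complete graph on 2s + 1 vertices contains a monochromatic triangle. -/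
open Finset

/-- Mantel-type bound: if `N` is a symmetric neighborhood system on `Fin n` such that
adjacent vertices have disjoint neighborhoods, then the sum of degrees is at most `n²/2`. -/
lemma mantel_deg_sum {n : ℕ} (N : Fin n → Finset (Fin n))
    (hsym : ∀ i j, j ∈ N i ↔ i ∈ N j)
    (hdisj : ∀ i j, j ∈ N i → Disjoint (N i) (N j)) :
    2 * ∑ i, (N i).card ≤ n ^ 2 := by
  set d : Fin n → ℕ := fun i => (N i).card with hd
  set D : ℕ := ∑ i, d i with hD
  -- each edge: d i + d j ≤ n
  have hedge : ∀ i j, j ∈ N i → d i + d j ≤ n := by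
    intro i j hj
    have := Finset.card_union_of_disjoint (hdisj i j hj)
    calc d i + d j = (N i ∪ N j).card := this.symm
      _ ≤ (Finset.univ : Finset (Fin n)).card := Finset.card_le_card (Finset.subset_univ _)
      _ = n := Finset.card_fin n
  -- 2 * ∑ d² ≤ n * D
  have hsq : 2 * ∑ i, d i ^ 2 ≤ n * D := by
    have h1 : ∑ i, ∑ j ∈ N i, d i = ∑ i, d i ^ 2 := by
      refine Finset.sum_congr rfl fun i _ => ?_
      rw [Finset.sum_const, smul_eq_mul, sq, mul_comm]
    have h2 : ∑ i, ∑ j ∈ N i, d j = ∑ i, d i ^ 2 := by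
      rw [Finset.sum_comm' (s' := fun j => N j) (t' := Finset.univ)
        (fun i j => by simp [hsym i j])]
      refine Finset.sum_congr rfl fun j _ => ?_
      rw [Finset.sum_const, smul_eq_mul, sq, mul_comm]
    have h3 : ∑ i, ∑ j ∈ N i, (d i + d j) ≤ ∑ i, ∑ j ∈ N i, n := by
      refine Finset.sum_le_sum fun i _ => Finset.sum_le_sum fun j hj => hedge i j hj
    have h4 : ∑ i, ∑ j ∈ N i, n = n * D := by
      rw [hD, Finset.mul_sum]
      refine Finset.sum_congr rfl fun i _ => ?_
      rw [Finset.sum_const, smul_eq_mul, mul_comm]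
    have h5 : ∑ i, ∑ j ∈ N i, (d i + d j) = 2 * ∑ i, d i ^ 2 := by
      simp only [Finset.sum_add_distrib]
      rw [h1, h2]; ring
    omega
  -- Cauchy-Schwarz : D² ≤ n * ∑ d²
  have hcs : (D : ℤ) ^ 2 ≤ (n : ℤ) * ∑ i, (d i : ℤ) ^ 2 := by
    have := sq_sum_le_card_mul_sum_sq (s := (Finset.univ : Finset (Fin n)))
      (f := fun i => (d i : ℤ))
    simpa [hD, Nat.cast_sum] using this
  have hcsn : D ^ 2 ≤ n * ∑ i, d i ^ 2 := by
    have : ((D ^ 2 : ℕ) : ℤ) ≤ ((n * ∑ i, d i ^ 2 : ℕ) : ℤ) := by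
      push_cast
      simpa using hcs
    exact_mod_cast this
  -- combine
  have key : 2 * D ^ 2 ≤ n ^ 2 * D := by
    calc 2 * D ^ 2 ≤ 2 * (n * ∑ i, d i ^ 2) := by omega
      _ = n * (2 * ∑ i, d i ^ 2) := by ring
      _ ≤ n * (n * D) := Nat.mul_le_mul_left _ hsq
      _ = n ^ 2 * D := by ring
  rcases Nat.eq_zero_or_pos D with h | h
  · simp [h]
  · have : 2 * D ≤ n ^ 2 := by
      have h2 : (2 * D) * D ≤ n ^ 2 * D := by nlinarith
      exact Nat.le_of_mul_le_mul_right h2 h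
    omega

/-- Helper: three pairwise distinct vertices with a common color give a mono triangle. -/
lemma mono_triangle {N r : ℕ} {χ : Fin N → Fin N → Finset (Fin r)}
    (hsym : ∀ i j, χ i j = χ j i) {i j w : Fin N} {c : Fin r}
    (hij : i ≠ j) (hiw : i ≠ w) (hjw : j ≠ w)
    (h1 : c ∈ χ i j) (h2 : c ∈ χ i w) (h3 : c ∈ χ j w) :
    HasMonoClique χ 3 := by
  refine ⟨{i, j, w}, c, ?_, ?_⟩
  · rw [Finset.card_insert_of_notMem (by simp [hij, hiw]),
      Finset.card_insert_of_notMem (by simp [hjw]), Finset.card_singleton]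
  · intro a ha b hb hab
    simp only [Finset.mem_insert, Finset.mem_singleton] at ha hb
    rcases ha with rfl | rfl | rfl <;> rcases hb with rfl | rfl | rfl <;>
      first
        | exact absurd rfl hab
        | assumption
        | (rw [hsym]; assumption)

/-- For every integer `s ≥ 2`, `R(3; 2s - 1, s) ≤ 2s + 1`. -/
theorem ramsey_three_odd (s : ℕ) (hs : 2 ≤ s) :
    setRamsey 3 (2 * s - 1) s ≤ 2 * s + 1 := by
  apply Nat.sInf_le
  intro χ hχ
  obtain ⟨hsym, hcard⟩ := hχ
  by_contra hmono
  -- neighborhoods per color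
  set Nb : Fin (2 * s - 1) → Fin (2 * s + 1) → Finset (Fin (2 * s + 1)) :=
    fun c i => Finset.univ.filter (fun j => j ≠ i ∧ c ∈ χ i j) with hNb
  have hmem : ∀ c i j, j ∈ Nb c i ↔ j ≠ i ∧ c ∈ χ i j := by
    intro c i j; simp [hNb]
  -- symmetry
  have hsymN : ∀ c i j, j ∈ Nb c i ↔ i ∈ Nb c j := by
    intro c i j
    rw [hmem, hmem, hsym i j]
    constructor <;> rintro ⟨h, h'⟩ <;> exact ⟨h.symm, h'⟩
  -- triangle-freeness: adjacent vertices have disjoint neighborhoods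
  have hdisjN : ∀ c i j, j ∈ Nb c i → Disjoint (Nb c i) (Nb c j) := by
    intro c i j hj
    rw [hmem] at hj
    rw [Finset.disjoint_left]
    intro w hwi hwj
    rw [hmem] at hwi hwj
    exact hmono (mono_triangle hsym (Ne.symm hj.1) (Ne.symm hwi.1) (Ne.symm hwj.1)
      hj.2 hwi.2 hwj.2)
  -- per-color degree sum bound
  have hcolor : ∀ c : Fin (2 * s - 1), ∑ i, (Nb c i).card ≤ 2 * s ^ 2 + 2 * s := by
    intro c
    have := mantel_deg_sum (Nb c) (hsymN c) (hdisjN c)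
    have hn2 : (2 * s + 1) ^ 2 = 4 * s ^ 2 + 4 * s + 1 := by ring
    omega
  -- total degree sum
  have htotal : ∑ c : Fin (2 * s - 1), ∑ i, (Nb c i).card = 2 * s ^ 2 * (2 * s + 1) := by
    have step1 : ∀ (c : Fin (2 * s - 1)) (i : Fin (2 * s + 1)),
        (Nb c i).card = ∑ j : Fin (2 * s + 1), if j ≠ i ∧ c ∈ χ i j then 1 else 0 := by
      intro c i
      rw [hNb, Finset.card_filter]
    calc ∑ c : Fin (2 * s - 1), ∑ i, (Nb c i).card
        = ∑ c : Fin (2 * s - 1), ∑ i : Fin (2 * s + 1), ∑ j : Fin (2 * s + 1),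
            if j ≠ i ∧ c ∈ χ i j then 1 else 0 := by
          refine Finset.sum_congr rfl fun c _ => Finset.sum_congr rfl fun i _ => step1 c i
      _ = ∑ i : Fin (2 * s + 1), ∑ j : Fin (2 * s + 1), ∑ c : Fin (2 * s - 1),
            if j ≠ i ∧ c ∈ χ i j then 1 else 0 := by
          rw [Finset.sum_comm]
          refine Finset.sum_congr rfl fun i _ => Finset.sum_comm
      _ = ∑ i : Fin (2 * s + 1), ∑ j : Fin (2 * s + 1), if j ≠ i then (χ i j).card else 0 := by
          refine Finset.sum_congr rfl fun i _ => Finset.sum_congr rfl fun j _ => ?_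
          by_cases h : j ≠ i
          · rw [if_pos h]
            have hc : ∀ c, (if j ≠ i ∧ c ∈ χ i j then (1 : ℕ) else 0)
                = (if c ∈ χ i j then 1 else 0) := by
              intro c
              by_cases hc : c ∈ χ i j <;> simp [h, hc]
            rw [Finset.sum_congr rfl fun c _ => hc c, ← Finset.filter_univ_mem (χ i j),
              Finset.card_filter]
            simp
          · push_neg at h
            subst h
            simp
      _ = ∑ i : Fin (2 * s + 1), ∑ j : Fin (2 * s + 1), if j ≠ i then s else 0 := by
          refine Finset.sum_congr rfl fun i _ => Finset.sum_congr rfl fun j _ => ?_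
          by_cases h : j ≠ i
          · rw [if_pos h, if_pos h, hcard i j (Ne.symm h)]
          · push_neg at h
            subst h
            simp
      _ = ∑ i : Fin (2 * s + 1), (2 * s) * s := by
          refine Finset.sum_congr rfl fun i _ => ?_
          rw [Finset.sum_ite, Finset.sum_const, Finset.sum_const, smul_eq_mul, smul_eq_mul,
            mul_zero, add_zero, Finset.filter_ne', Finset.card_erase_of_mem (Finset.mem_univ i)]
          simp [mul_comm]
      _ = 2 * s ^ 2 * (2 * s + 1) := by
          rw [Finset.sum_const, Finset.card_fin, smul_eq_mul]
          ring
  -- contradiction by counting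
  have hbound : ∑ c : Fin (2 * s - 1), ∑ i, (Nb c i).card ≤ (2 * s - 1) * (2 * s ^ 2 + 2 * s) := by
    calc ∑ c : Fin (2 * s - 1), ∑ i, (Nb c i).card
        ≤ ∑ _c : Fin (2 * s - 1), (2 * s ^ 2 + 2 * s) := Finset.sum_le_sum fun c _ => hcolor c
      _ = (2 * s - 1) * (2 * s ^ 2 + 2 * s) := by
          rw [Finset.sum_const, Finset.card_fin, smul_eq_mul]
  rw [htotal] at hbound
  have hu : (2 * s - 1) + 1 = 2 * s := by omega
  have e1 : (2 * s - 1) * (2 * s ^ 2 + 2 * s) + (2 * s ^ 2 + 2 * s)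
      = ((2 * s - 1) + 1) * (2 * s ^ 2 + 2 * s) := by ring
  rw [hu] at e1
  have e2 : 2 * s * (2 * s ^ 2 + 2 * s) = 4 * s ^ 3 + 4 * s ^ 2 := by ring
  have e3 : 2 * s ^ 2 * (2 * s + 1) = 4 * s ^ 3 + 2 * s ^ 2 := by ring
  have hs2 : s ≤ s ^ 2 := by nlinarith
  omega
end

section
/- Let q be a positive integer and let G be a graph on N vertices with N ≥ 12q² that contains no clique on q+1 vertices. Then the number of edges of G is at most (1 − 1/q)·N²/2 − N·f_q(G)/(8q²), where f_q(G) is the minimum number f such that one can delete some set of f vertices from G so that the remaining induced subgraph admits a proper vertex coloring with q colors. -/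
open Finset

section Helpers

variable {V : Type*} [Fintype V] [DecidableEq V] (G : SimpleGraph V) [DecidableRel G.Adj]

lemma nbr_inter_eq_filter (x : V) (t : Finset V) :
    G.neighborFinset x ∩ t = t.filter (fun y => G.Adj x y) := by
  ext y; simp [SimpleGraph.mem_neighborFinset, and_comm]

lemma sum_inter_comm (s t : Finset V) :
    ∑ x ∈ s, (G.neighborFinset x ∩ t).card = ∑ x ∈ t, (G.neighborFinset x ∩ s).card := by
  simp only [nbr_inter_eq_filter, Finset.card_filter]
  rw [Finset.sum_comm]
  apply Finset.sum_congr rfl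
  intro x _
  apply Finset.sum_congr rfl
  intro y _
  simp [G.adj_comm]

lemma inter_card_split (x : V) {t₁ t₂ t : Finset V} (h : t₁ ∪ t₂ = t) (hd : Disjoint t₁ t₂) :
    (G.neighborFinset x ∩ t).card
      = (G.neighborFinset x ∩ t₁).card + (G.neighborFinset x ∩ t₂).card := by
  subst h
  rw [Finset.inter_union_distrib_left, Finset.card_union_of_disjoint]
  exact hd.mono inter_subset_right inter_subset_right

lemma furedi : ∀ (r : ℕ) (A : Finset V), (∀ t ⊆ A, ¬ G.IsNClique (r+1) t) →
    ∃ C : Fin r → Finset V,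
      univ.biUnion C = A ∧
      (∀ i j, i ≠ j → Disjoint (C i) (C j)) ∧
      (∑ x ∈ A, (G.neighborFinset x ∩ A).card) +
        ((∑ i, ∑ x ∈ C i, (G.neighborFinset x ∩ C i).card) + ∑ i, (C i).card ^ 2)
        ≤ A.card ^ 2
  | 0, A, hA => by
      have hA0 : A = ∅ := by
        by_contra h
        obtain ⟨x, hx⟩ := Finset.nonempty_iff_ne_empty.2 h
        exact hA {x} (by simpa) ⟨by simp [SimpleGraph.IsClique], by simp⟩
      refine ⟨fun i => ∅, ?_, ?_, ?_⟩
      · rw [hA0]; ext x; simp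
      · simp
      · simp [hA0]
  | (r+1), A, hA => by
      rcases eq_or_ne A ∅ with hA0 | hne
      · refine ⟨fun i => ∅, ?_, ?_, ?_⟩
        · rw [hA0]; ext x; simp
        · simp
        · simp [hA0]
      obtain ⟨v, hv, hmax⟩ := Finset.exists_max_image A
        (fun x => (G.neighborFinset x ∩ A).card) (Finset.nonempty_iff_ne_empty.2 hne)
      set A' := A ∩ G.neighborFinset v with hA'def
      have hA'sub : A' ⊆ A := inter_subset_left
      have hA' : ∀ t ⊆ A', ¬ G.IsNClique (r+1) t := by
        intro t ht hcl
        refine hA (insert v t) ?_ (hcl.insert ?_)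
        · intro y hy
          rcases Finset.mem_insert.1 hy with rfl | hy
          · exact hv
          · exact hA'sub (ht hy)
        · intro b hb
          have := ht hb
          rw [hA'def, Finset.mem_inter, SimpleGraph.mem_neighborFinset] at this
          exact this.2
      obtain ⟨C', hcover, hdisj, hineq⟩ := furedi r A' hA'
      have hC'sub : ∀ i, C' i ⊆ A' := by
        intro i
        rw [← hcover]
        exact Finset.subset_biUnion_of_mem C' (Finset.mem_univ i)
      set C₀ := A \ A' with hC₀def
      have hunion : C₀ ∪ A' = A := Finset.sdiff_union_of_subset hA'sub
      have hd0 : Disjoint C₀ A' := Finset.sdiff_disjoint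
      refine ⟨Fin.cons C₀ C', ?_, ?_, ?_⟩
      · ext x
        simp only [Finset.mem_biUnion, Finset.mem_univ, true_and]
        rw [Fin.exists_fin_succ]
        simp only [Fin.cons_zero, Fin.cons_succ]
        constructor
        · rintro (h | ⟨i, h⟩)
          · exact Finset.sdiff_subset h
          · exact hA'sub (hC'sub i h)
        · intro hx
          by_cases hx' : x ∈ A'
          · right
            have : x ∈ univ.biUnion C' := hcover.symm ▸ hx'
            obtain ⟨i, _, hi⟩ := Finset.mem_biUnion.1 this
            exact ⟨i, hi⟩
          · left
            exact Finset.mem_sdiff.2 ⟨hx, hx'⟩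
      · intro i j hij
        rcases Fin.eq_zero_or_eq_succ i with rfl | ⟨i', rfl⟩ <;>
          rcases Fin.eq_zero_or_eq_succ j with rfl | ⟨j', rfl⟩
        · exact absurd rfl hij
        · simp only [Fin.cons_zero, Fin.cons_succ]
          exact hd0.mono_right (hC'sub j')
        · simp only [Fin.cons_zero, Fin.cons_succ]
          exact (hd0.mono_right (hC'sub i')).symm
        · simp only [Fin.cons_succ]
          exact hdisj i' j' (fun h => hij (by rw [h]))
      · -- the counting
        have hcardA : C₀.card + A'.card = A.card := by
          rw [hC₀def]
          exact Finset.card_sdiff_add_card_eq_card hA'sub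
        have hkey1 : ∀ x ∈ A, (G.neighborFinset x ∩ A).card ≤ A'.card := by
          intro x hx
          refine (hmax x hx).trans (le_of_eq ?_)
          rw [hA'def, Finset.inter_comm]
        have hkey2 : ∀ x, (G.neighborFinset x ∩ A).card
            = (G.neighborFinset x ∩ C₀).card + (G.neighborFinset x ∩ A').card :=
          fun x => inter_card_split G x hunion hd0
        have hsplit : ∀ (s : Finset V), ∑ x ∈ s, (G.neighborFinset x ∩ A).card
            = (∑ x ∈ s, (G.neighborFinset x ∩ C₀).card)
              + ∑ x ∈ s, (G.neighborFinset x ∩ A').card := by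
          intro s
          rw [← Finset.sum_add_distrib]
          exact Finset.sum_congr rfl (fun x _ => hkey2 x)
        have hEWA : ∑ x ∈ A, (G.neighborFinset x ∩ A).card
            = ((∑ x ∈ C₀, (G.neighborFinset x ∩ C₀).card)
              + ∑ x ∈ C₀, (G.neighborFinset x ∩ A').card)
              + ((∑ x ∈ A', (G.neighborFinset x ∩ C₀).card)
              + ∑ x ∈ A', (G.neighborFinset x ∩ A').card) := by
          have hAsum : ∀ f : V → ℕ, ∑ x ∈ A, f x = (∑ x ∈ C₀, f x) + ∑ x ∈ A', f x := by
            intro f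
            rw [← hunion]
            exact Finset.sum_union hd0
          rw [hAsum (fun x => (G.neighborFinset x ∩ A).card), hsplit C₀, hsplit A']
        have hcross : ∑ x ∈ A', (G.neighborFinset x ∩ C₀).card
            = ∑ x ∈ C₀, (G.neighborFinset x ∩ A').card := sum_inter_comm G A' C₀
        have hbound : (∑ x ∈ C₀, (G.neighborFinset x ∩ C₀).card)
            + ∑ x ∈ C₀, (G.neighborFinset x ∩ A').card ≤ C₀.card * A'.card := by
          rw [← Finset.sum_add_distrib]
          calc ∑ x ∈ C₀, ((G.neighborFinset x ∩ C₀).card + (G.neighborFinset x ∩ A').card)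
              = ∑ x ∈ C₀, (G.neighborFinset x ∩ A).card := by
                apply Finset.sum_congr rfl; intro x _; rw [hkey2 x]
            _ ≤ ∑ _x ∈ C₀, A'.card :=
                Finset.sum_le_sum (fun x hx => hkey1 x (Finset.mem_sdiff.1 hx).1)
            _ = C₀.card * A'.card := by rw [Finset.sum_const, smul_eq_mul]
        -- rewrite the Fin (r+1) sums
        rw [Fin.sum_univ_succ, Fin.sum_univ_succ]
        simp only [Fin.cons_zero, Fin.cons_succ]
        have hsq : A.card ^ 2 = C₀.card^2 + 2*(C₀.card * A'.card) + A'.card^2 := by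
          rw [← hcardA]; ring
        rw [hEWA, hsq]
        have h2 : (∑ x ∈ A', (G.neighborFinset x ∩ A').card)
            + ((∑ i, ∑ x ∈ C' i, (G.neighborFinset x ∩ C' i).card) + ∑ i, (C' i).card ^ 2)
            ≤ A'.card ^ 2 := hineq
        rw [hcross]
        linarith [hbound, h2]


lemma transversal_bound {q : ℕ} (C : Fin q → Finset V)
    (hdisj : ∀ i j, i ≠ j → Disjoint (C i) (C j))
    (J : Finset (Fin q)) (hJne : J.Nonempty) (W : Fin q → Finset V) (hW : ∀ j, W j ⊆ C j)
    (Hfree : ∀ g : Fin q → V, (∀ j ∈ J, g j ∈ W j) →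
      ∃ j₁ ∈ J, ∃ j₂ ∈ J, j₁ < j₂ ∧ ¬ G.Adj (g j₁) (g j₂))
    (Bad : Finset (V × V))
    (hBad : ∀ a b (j₁ j₂ : Fin q), j₁ ∈ J → j₂ ∈ J → j₁ < j₂ → a ∈ W j₁ → b ∈ W j₂ →
      ¬ G.Adj a b → (a, b) ∈ Bad) :
    ∃ j ∈ J, (W j).card ^ 2 ≤ Bad.card := by
  classical
  by_cases h0 : ∃ j ∈ J, W j = ∅
  · obtain ⟨j, hj, hempty⟩ := h0
    exact ⟨j, hj, by simp [hempty]⟩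
  push_neg at h0
  have hpos : ∀ j ∈ J, 0 < (W j).card := by
    intro j hj
    exact Finset.card_pos.2 (h0 j hj)
  have huniq : ∀ (a : V) (j j' : Fin q), a ∈ W j → a ∈ W j' → j = j' := by
    intro a j j' h h'
    by_contra hne
    exact Finset.disjoint_left.1 (hdisj j j' hne) (hW j h) (hW j' h')
  obtain ⟨jOf, hjOfeq⟩ : ∃ f : V → Fin q, ∀ (a : V) (j : Fin q), j ∈ J → a ∈ W j → f a = j := by
    refine ⟨fun a => if h : ∃ j ∈ J, a ∈ W j then h.choose else hJne.choose, ?_⟩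
    intro a j hj ha
    have hex : ∃ j ∈ J, a ∈ W j := ⟨j, hj, ha⟩
    show (if h : ∃ j ∈ J, a ∈ W j then h.choose else hJne.choose) = j
    rw [dif_pos hex]
    obtain ⟨hj', ha'⟩ := hex.choose_spec
    exact huniq a _ _ ha' ha
  obtain ⟨j₀, hj₀⟩ := hJne
  obtain ⟨v₀, _⟩ := h0 j₀ hj₀
  set W' : Fin q → Finset V := fun j => if j ∈ J then W j else {v₀} with hW'def
  set T : Finset (Fin q → V) := Fintype.piFinset W' with hTdef
  have hTcard : T.card = ∏ j ∈ J, (W j).card := by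
    rw [hTdef, Fintype.card_piFinset]
    rw [← Finset.prod_subset (Finset.subset_univ J)
      (fun x _ hx => by simp [hW'def, if_neg hx])]
    exact Finset.prod_congr rfl (fun j hj => by simp [hW'def, if_pos hj])
  set Bd : Finset (V × V) := (Finset.univ ×ˢ Finset.univ).filter
    (fun p => (∃ j₁ ∈ J, p.1 ∈ W j₁) ∧ (∃ j₂ ∈ J, p.2 ∈ W j₂) ∧
      jOf p.1 < jOf p.2 ∧ ¬ G.Adj p.1 p.2) with hBddef
  have hBdmem : ∀ p ∈ Bd, jOf p.1 ∈ J ∧ jOf p.2 ∈ J ∧ p.1 ∈ W (jOf p.1) ∧ p.2 ∈ W (jOf p.2)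
      ∧ jOf p.1 < jOf p.2 ∧ ¬ G.Adj p.1 p.2 := by
    intro p hp
    rw [hBddef, Finset.mem_filter] at hp
    obtain ⟨-, ⟨j₁, hj₁, hw₁⟩, ⟨j₂, hj₂, hw₂⟩, hlt, hnadj⟩ := hp
    rw [hjOfeq p.1 j₁ hj₁ hw₁, hjOfeq p.2 j₂ hj₂ hw₂]
    exact ⟨hj₁, hj₂, hw₁, hw₂, by rwa [hjOfeq p.1 j₁ hj₁ hw₁, hjOfeq p.2 j₂ hj₂ hw₂] at hlt,
      hnadj⟩
  have hBdsub : Bd ⊆ Bad := by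
    intro p hp
    obtain ⟨h1, h2, h3, h4, h5, h6⟩ := hBdmem p hp
    exact hBad p.1 p.2 _ _ h1 h2 h5 h3 h4 h6
  set fib : V × V → Finset (Fin q → V) :=
    fun p => T.filter (fun g => g (jOf p.1) = p.1 ∧ g (jOf p.2) = p.2) with hfibdef
  have hcover : T ⊆ Bd.biUnion fib := by
    intro g hg
    have hgJ : ∀ j ∈ J, g j ∈ W j := by
      intro j hj
      have h2 : g j ∈ (if j ∈ J then W j else {v₀}) := (Fintype.mem_piFinset.1 hg) j
      rwa [if_pos hj] at h2
    obtain ⟨j₁, hj₁, j₂, hj₂, hlt, hnadj⟩ := Hfree g hgJ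
    have e₁ : jOf (g j₁) = j₁ := hjOfeq _ _ hj₁ (hgJ _ hj₁)
    have e₂ : jOf (g j₂) = j₂ := hjOfeq _ _ hj₂ (hgJ _ hj₂)
    refine Finset.mem_biUnion.2 ⟨(g j₁, g j₂), ?_, ?_⟩
    · rw [hBddef, Finset.mem_filter]
      exact ⟨Finset.mem_product.2 ⟨Finset.mem_univ _, Finset.mem_univ _⟩,
        ⟨j₁, hj₁, hgJ _ hj₁⟩, ⟨j₂, hj₂, hgJ _ hj₂⟩, by rw [e₁, e₂]; exact hlt, hnadj⟩
    · rw [hfibdef, Finset.mem_filter]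
      exact ⟨hg, by rw [e₁], by rw [e₂]⟩
  have hfib : ∀ p ∈ Bd, (fib p).card * ((W (jOf p.1)).card * (W (jOf p.2)).card) ≤ T.card := by
    intro p hp
    obtain ⟨hj₁, hj₂, hw₁, hw₂, hlt, -⟩ := hBdmem p hp
    have hne12 : jOf p.1 ≠ jOf p.2 := ne_of_lt hlt
    set W'' : Fin q → Finset V := fun j =>
      if j = jOf p.1 then {p.1} else if j = jOf p.2 then {p.2} else W' j with hW''def
    have hsub : fib p ⊆ Fintype.piFinset W'' := by
      intro g hg
      rw [hfibdef, Finset.mem_filter] at hg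
      obtain ⟨hgT, hg1, hg2⟩ := hg
      rw [Fintype.mem_piFinset]
      intro j
      rw [hW''def]
      by_cases h1 : j = jOf p.1
      · subst h1; simp [hg1]
      · by_cases h2 : j = jOf p.2
        · subst h2; simp [h1, hg2]
        · simp only [if_neg h1, if_neg h2]
          exact (Fintype.mem_piFinset.1 hgT) j
    have hprod : (∏ j, (W'' j).card) * ((W (jOf p.1)).card * (W (jOf p.2)).card)
        = ∏ j, (W' j).card := by
      have m1 : jOf p.1 ∈ Finset.univ.erase (jOf p.2) :=
        Finset.mem_erase.2 ⟨hne12, Finset.mem_univ _⟩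
      rw [← Finset.mul_prod_erase Finset.univ (fun j => (W' j).card) (Finset.mem_univ (jOf p.2)),
        ← Finset.mul_prod_erase _ (fun j => (W' j).card) m1]
      rw [← Finset.mul_prod_erase Finset.univ (fun j => (W'' j).card) (Finset.mem_univ (jOf p.2)),
        ← Finset.mul_prod_erase _ (fun j => (W'' j).card) m1]
      have e1 : (W'' (jOf p.2)).card = 1 := by
        rw [hW''def]; simp [if_neg (Ne.symm hne12)]
      have e2 : (W'' (jOf p.1)).card = 1 := by
        rw [hW''def]; simp
      have e3 : ∀ j ∈ (Finset.univ.erase (jOf p.2)).erase (jOf p.1),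
          (W'' j).card = (W' j).card := by
        intro j hj
        obtain ⟨hja, hjb⟩ := Finset.mem_erase.1 hj
        obtain ⟨hjc, -⟩ := Finset.mem_erase.1 hjb
        rw [hW''def]
        simp [if_neg hja, if_neg hjc]
      have e4 : (W' (jOf p.2)).card = (W (jOf p.2)).card := by
        rw [hW'def]; simp [if_pos hj₂]
      have e5 : (W' (jOf p.1)).card = (W (jOf p.1)).card := by
        rw [hW'def]; simp [if_pos hj₁]
      rw [Finset.prod_congr rfl e3, e1, e2, e4, e5]
      ring
    calc (fib p).card * ((W (jOf p.1)).card * (W (jOf p.2)).card)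
        ≤ (Fintype.piFinset W'').card * ((W (jOf p.1)).card * (W (jOf p.2)).card) :=
          Nat.mul_le_mul_right _ (Finset.card_le_card hsub)
      _ = T.card := by rw [Fintype.card_piFinset, hprod, hTdef, Fintype.card_piFinset]
  obtain ⟨jm, hjm, hmin⟩ := Finset.exists_min_image J (fun j => (W j).card) ⟨j₀, hj₀⟩
  refine ⟨jm, hjm, ?_⟩
  have hTpos : 0 < T.card := by
    rw [hTcard]
    exact Finset.prod_pos hpos
  have key : (W jm).card ^ 2 * T.card ≤ Bd.card * T.card := by
    calc (W jm).card ^ 2 * T.card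
        ≤ (W jm).card ^ 2 * ∑ p ∈ Bd, (fib p).card :=
          Nat.mul_le_mul_left _ ((Finset.card_le_card hcover).trans Finset.card_biUnion_le)
      _ = ∑ p ∈ Bd, (W jm).card ^ 2 * (fib p).card := by rw [Finset.mul_sum]
      _ ≤ ∑ p ∈ Bd, T.card := by
          apply Finset.sum_le_sum
          intro p hp
          obtain ⟨hj₁, hj₂, -, -, -, -⟩ := hBdmem p hp
          calc (W jm).card ^ 2 * (fib p).card
              ≤ ((W (jOf p.1)).card * (W (jOf p.2)).card) * (fib p).card := by
                apply Nat.mul_le_mul_right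
                rw [pow_two]
                exact Nat.mul_le_mul (hmin _ hj₁) (hmin _ hj₂)
            _ = (fib p).card * ((W (jOf p.1)).card * (W (jOf p.2)).card) := by ring
            _ ≤ T.card := hfib p hp
      _ = Bd.card * T.card := by rw [Finset.sum_const, smul_eq_mul]
  have h1 : (W jm).card ^ 2 ≤ Bd.card := Nat.le_of_mul_le_mul_right key hTpos
  exact h1.trans (Finset.card_le_card hBdsub)


end Helpers

lemma core2h (s t m : ℝ) (hs : 0 ≤ s) (ht : 0 ≤ t) (hm : 0 ≤ m) (h : 4*(s^2+t^2) ≤ m^2) :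
    t^2*m ≤ 2*(s^2+t^2)*(m-s) := by
  have hm2s : 2*s ≤ m := by nlinarith [sq_nonneg t]
  nlinarith [mul_nonneg (by linarith : (0:ℝ) ≤ m - 2*s) (by positivity : (0:ℝ) ≤ 2*s^2+t^2),
    pow_nonneg hs 3]

lemma core3h (s t m : ℝ) (hs : 0 ≤ s) (ht : 0 ≤ t) (hm : 0 ≤ m) (h : 4*(s^2+t^2) ≤ m^2) :
    t^2*m ≤ 3*(s^2+t^2)*(m-s-t) := by
  have hQ : (0:ℝ) ≤ 27*s^4 - 18*s^3*t + 30*s^2*t^2 - 18*s*t^3 + 7*t^4 := by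
    nlinarith [sq_nonneg (s*(s-t)), sq_nonneg (t*(s-t)), sq_nonneg (s^2-t^2),
      sq_nonneg (s*t), sq_nonneg (s^2 - s*t), sq_nonneg (t^2 - s*t), sq_nonneg (s-t),
      mul_nonneg hs ht, sq_nonneg (s^2 + t^2 - 3*s*t)]
  by_cases hst0 : s^2 + t^2 = 0
  · have hs0 : s = 0 := by nlinarith [sq_nonneg s, sq_nonneg t]
    have ht0' : t = 0 := by nlinarith [sq_nonneg s, sq_nonneg t]
    simp [hs0, ht0']
  · have hr : 0 < s^2 + t^2 := lt_of_le_of_ne (by positivity) (Ne.symm hst0)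
    have hmpos : 0 < m := by nlinarith
    have hG : 0 < m*(3*s^2+2*t^2) + 3*(s^2+t^2)*(s+t) := by nlinarith [mul_nonneg hs ht]
    have hFG : 0 ≤ (3*(s^2+t^2)*(m-s-t) - t^2*m) * (m*(3*s^2+2*t^2) + 3*(s^2+t^2)*(s+t)) := by
      have h1 : 4*(s^2+t^2)*((3*s^2+2*t^2)^2) ≤ m^2*((3*s^2+2*t^2)^2) :=
        mul_le_mul_of_nonneg_right h (sq_nonneg _)
      have h2 : 0 ≤ (s^2+t^2) * (27*s^4 - 18*s^3*t + 30*s^2*t^2 - 18*s*t^3 + 7*t^4) :=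
        mul_nonneg (by positivity) hQ
      nlinarith [h1, h2]
    by_contra hcon
    push_neg at hcon
    have : (3*(s^2+t^2)*(m-s-t) - t^2*m) * (m*(3*s^2+2*t^2) + 3*(s^2+t^2)*(s+t)) < 0 :=
      mul_neg_of_neg_of_pos (by linarith) hG
    linarith

/-- `f_q(G)`: the minimum number of vertices whose deletion from `G` leaves an induced
subgraph admitting a proper vertex coloring with `q` colors. -/
noncomputable def minDelToColorable {V : Type*} [Fintype V] [DecidableEq V]
    (q : ℕ) (G : SimpleGraph V) : ℕ :=
  sInf {f : ℕ | ∃ S : Finset V, S.card = f ∧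
    (G.induce (↑(Sᶜ) : Set V)).Colorable q}

set_option maxHeartbeats 4000000 in
/-- Every `K_{q+1}`-free graph `G` on `N ≥ 12q²` vertices has at most
`(1 - 1/q) N²/2 - N f_q(G)/(8q²)` edges. -/
theorem turan_stability (q N : ℕ) (hq : 0 < q) (hN : 12 * q ^ 2 ≤ N)
    (G : SimpleGraph (Fin N)) [DecidableRel G.Adj]
    (hG : G.CliqueFree (q + 1)) :
    (G.edgeFinset.card : ℝ) ≤
      (1 - 1 / (q : ℝ)) * (N : ℝ) ^ 2 / 2 -
        (N : ℝ) * (minDelToColorable q G : ℝ) / (8 * (q : ℝ) ^ 2) := by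
  classical
  obtain ⟨C, hcover, hdisj, hineq⟩ := furedi G q Finset.univ (fun t _ => hG t)
  have hex : ∀ y : Fin N, ∃ i, y ∈ C i := by
    intro y
    have hy : y ∈ Finset.univ.biUnion C := hcover.symm ▸ Finset.mem_univ y
    obtain ⟨i, -, hi⟩ := Finset.mem_biUnion.1 hy
    exact ⟨i, hi⟩
  choose pt hpt using hex
  have hptuniq : ∀ (y : Fin N) i, y ∈ C i → pt y = i := by
    intro y i hy
    by_contra hne
    exact Finset.disjoint_left.1 (hdisj _ _ hne) (hpt y) hy
  have hmemC : ∀ (y : Fin N) i, y ∈ C i ↔ pt y = i := by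
    intro y i
    constructor
    · exact hptuniq y i
    · rintro rfl; exact hpt y
  -- deletion-to-coloring
  have colorable_of : ∀ X : Finset (Fin N),
      (∀ y z, G.Adj y z → pt y = pt z → y ∈ X ∨ z ∈ X) →
      minDelToColorable q G ≤ X.card := by
    intro X hX
    apply Nat.sInf_le
    refine ⟨X, rfl, ⟨SimpleGraph.Coloring.mk (fun v => pt v.1) ?_⟩⟩
    rintro ⟨a, ha⟩ ⟨b, hb⟩ hab heq
    have hab' : G.Adj a b := hab
    have ha' : a ∉ X := by simpa using ha
    have hb' : b ∉ X := by simpa using hb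
    rcases hX a b hab' heq with h | h
    exacts [ha' h, hb' h]
  have hminN : minDelToColorable q G ≤ N := by
    have h := colorable_of Finset.univ (fun y z _ _ => Or.inl (Finset.mem_univ y))
    simpa using h
  -- ℕ counting quantities (opaque)
  obtain ⟨c, hc⟩ : ∃ c : Fin q → ℕ, ∀ i, c i = (C i).card := ⟨_, fun _ => rfl⟩
  obtain ⟨ds, hds⟩ : ∃ d : Fin N → ℕ,
      ∀ y, d y = (G.neighborFinset y ∩ C (pt y)).card := ⟨_, fun _ => rfl⟩
  obtain ⟨msF, hmsF⟩ : ∃ F : Fin N → Finset (Fin N),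
      ∀ y, F y = Finset.univ.filter (fun z => ¬ pt z = pt y ∧ ¬ G.Adj y z) :=
    ⟨_, fun _ => rfl⟩
  obtain ⟨E, hE⟩ : ∃ E : ℕ, E = ∑ y, G.degree y := ⟨_, rfl⟩
  obtain ⟨P, hP⟩ : ∃ P : ℕ, P = ∑ y, ds y := ⟨_, rfl⟩
  obtain ⟨Mss, hMs⟩ : ∃ M : ℕ, M = ∑ y, (msF y).card := ⟨_, rfl⟩
  obtain ⟨SC, hSC⟩ : ∃ S : ℕ, S = ∑ i, c i * c i := ⟨_, rfl⟩
  have hcsum : ∑ i, c i = N := by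
    rw [Finset.sum_congr rfl (fun i _ => hc i),
      ← Finset.card_biUnion (fun i _ j _ hij => hdisj i j hij), hcover, Finset.card_univ,
      Fintype.card_fin]
  have hpartsum : ∀ f : Fin N → ℕ, ∑ y, f y = ∑ i, ∑ y ∈ C i, f y := by
    intro f
    conv_lhs => rw [← hcover]
    exact Finset.sum_biUnion (fun i _ j _ hij => hdisj i j hij)
  have hP' : ∑ i, ∑ x ∈ C i, (G.neighborFinset x ∩ C i).card = P := by
    rw [hP, hpartsum ds]
    refine Finset.sum_congr rfl (fun i _ => Finset.sum_congr rfl (fun x hx => ?_))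
    rw [hds x, hptuniq x i hx]
  have hc2 : ∑ y, c (pt y) = SC := by
    rw [hSC, hpartsum (fun y => c (pt y))]
    refine Finset.sum_congr rfl (fun i _ => ?_)
    rw [Finset.sum_congr rfl (fun x hx => by rw [hptuniq x i hx]), Finset.sum_const,
      smul_eq_mul, hc i]
  -- F2 : Füredi inequality
  have hF2 : E + (P + SC) ≤ N * N := by
    have h1 : ∑ x ∈ Finset.univ, ((G.neighborFinset x ∩ Finset.univ)).card = E := by
      rw [hE]
      refine Finset.sum_congr rfl (fun x _ => ?_)
      rw [Finset.inter_univ]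
      exact G.card_neighborFinset_eq_degree x
    have h2 := hineq
    rw [h1, hP'] at h2
    have h3 : ∑ i, (C i).card ^ 2 = SC := by
      rw [hSC]
      refine Finset.sum_congr rfl (fun i _ => ?_)
      rw [hc i, pow_two]
    rw [h3] at h2
    calc E + (P + SC) ≤ (Finset.univ : Finset (Fin N)).card ^ 2 := h2
      _ = N * N := by rw [Finset.card_univ, Fintype.card_fin, pow_two]
  -- F3 : per-vertex identity and its sum
  have hyid : ∀ y, G.degree y + c (pt y) + (msF y).card = N + ds y := by
    intro y
    have h1 : (Finset.univ.filter (fun z => pt z = pt y)).card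
        + (Finset.univ.filter (fun z => ¬ pt z = pt y)).card = N := by
      rw [Finset.card_filter_add_card_filter_not, Finset.card_univ, Fintype.card_fin]
    have h2 : ((Finset.univ.filter (fun z => ¬ pt z = pt y)).filter (fun z => G.Adj y z)).card
        + ((Finset.univ.filter (fun z => ¬ pt z = pt y)).filter (fun z => ¬ G.Adj y z)).card
        = (Finset.univ.filter (fun z => ¬ pt z = pt y)).card :=
      Finset.card_filter_add_card_filter_not _
    have h4 : ((Finset.univ.filter (fun z => G.Adj y z)).filter (fun z => pt z = pt y)).card
        + ((Finset.univ.filter (fun z => G.Adj y z)).filter (fun z => ¬ pt z = pt y)).card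
        = (Finset.univ.filter (fun z => G.Adj y z)).card :=
      Finset.card_filter_add_card_filter_not _
    have hdeg : G.degree y = (Finset.univ.filter (fun z => G.Adj y z)).card := by
      rw [← G.card_neighborFinset_eq_degree]
      congr 1
      ext z
      simp [SimpleGraph.mem_neighborFinset]
    have hdsy : ds y
        = ((Finset.univ.filter (fun z => G.Adj y z)).filter (fun z => pt z = pt y)).card := by
      rw [hds y]
      congr 1
      ext z
      simp only [Finset.mem_inter, Finset.mem_filter, Finset.mem_univ, true_and,
        SimpleGraph.mem_neighborFinset, hmemC z (pt y)]
    have hcomm : (Finset.univ.filter (fun z => ¬ pt z = pt y)).filter (fun z => G.Adj y z)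
        = (Finset.univ.filter (fun z => G.Adj y z)).filter (fun z => ¬ pt z = pt y) := by
      rw [Finset.filter_filter, Finset.filter_filter]
      apply Finset.filter_congr
      intro z _
      tauto
    have hmsy : (msF y).card
        = ((Finset.univ.filter (fun z => ¬ pt z = pt y)).filter (fun z => ¬ G.Adj y z)).card := by
      rw [hmsF y]
      congr 1
      rw [Finset.filter_filter]
    have hcy : c (pt y) = (Finset.univ.filter (fun z => pt z = pt y)).card := by
      rw [hc (pt y)]
      congr 1
      ext z
      simp [hmemC z (pt y)]
    rw [hcomm] at h2
    omega
  have hF3 : E + SC + Mss = N * N + P := by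
    have h1 : ∑ y, (G.degree y + c (pt y) + (msF y).card) = ∑ y : Fin N, (N + ds y) :=
      Finset.sum_congr rfl (fun y _ => hyid y)
    rw [Finset.sum_add_distrib, Finset.sum_add_distrib, Finset.sum_add_distrib,
      Finset.sum_const, Finset.card_univ, Fintype.card_fin, smul_eq_mul, hc2, ← hE, ← hMs,
      ← hP] at h1
    omega
  -- ℝ setup
  have hQpos : (0:ℝ) < (q:ℝ) := by exact_mod_cast hq
  have hNpos0 : 0 < N := by nlinarith [hN, hq]
  have hNpos : (0:ℝ) < (N:ℝ) := by exact_mod_cast hNpos0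
  have hNq : (12:ℝ) * (q:ℝ)^2 ≤ (N:ℝ) := by exact_mod_cast hN
  obtain ⟨D, hDdef⟩ : ∃ x : ℝ, x = (1 - 1/(q:ℝ)) * (N:ℝ)^2 - 2 * (G.edgeFinset.card : ℝ) := ⟨_, rfl⟩
  have hED : (E : ℝ) = 2 * (G.edgeFinset.card : ℝ) := by
    have := G.sum_degrees_eq_twice_card_edges
    rw [hE]
    exact_mod_cast congrArg (Nat.cast : ℕ → ℝ) this
  obtain ⟨Vr, hVrdef⟩ : ∃ x : ℝ, x = ∑ i, ((c i : ℝ) - (N:ℝ)/(q:ℝ))^2 := ⟨_, rfl⟩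
  have hVrpos : 0 ≤ Vr := by
    rw [hVrdef]
    exact Finset.sum_nonneg (fun i _ => sq_nonneg _)
  have hcsumR : ∑ i, (c i : ℝ) = (N:ℝ) := by exact_mod_cast congrArg (Nat.cast : ℕ → ℝ) hcsum
  have hSCR : (SC:ℝ) = ∑ i, (c i : ℝ)^2 := by
    rw [hSC]
    push_cast
    exact Finset.sum_congr rfl (fun i _ => (pow_two _).symm)
  have hVr' : Vr = (SC:ℝ) - (N:ℝ)^2/(q:ℝ) := by
    rw [hVrdef, hSCR]
    have expand : ∀ i : Fin q, ((c i : ℝ) - (N:ℝ)/(q:ℝ))^2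
        = (c i : ℝ)^2 - 2*((N:ℝ)/(q:ℝ))*(c i : ℝ) + ((N:ℝ)/(q:ℝ))^2 := fun i => by ring
    rw [Finset.sum_congr rfl (fun i _ => expand i), Finset.sum_add_distrib,
      Finset.sum_sub_distrib, ← Finset.mul_sum, hcsumR, Finset.sum_const, Finset.card_univ,
      Fintype.card_fin, nsmul_eq_mul]
    field_simp
    ring
  have hF2R : (E:ℝ) + ((P:ℝ) + (SC:ℝ)) ≤ (N:ℝ)^2 := by
    have h := hF2
    have h2 : ((E:ℝ) + ((P:ℝ) + (SC:ℝ))) ≤ ((N*N : ℕ):ℝ) := by exact_mod_cast h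
    rw [Nat.cast_mul] at h2
    have hNN : ((N:ℝ)*(N:ℝ)) = (N:ℝ)^2 := (pow_two _).symm
    linarith [h2]
  have hF3R : (E:ℝ) + (SC:ℝ) + (Mss:ℝ) = (N:ℝ)^2 + (P:ℝ) := by
    have h2 : ((E:ℝ) + (SC:ℝ) + (Mss:ℝ)) = ((N*N : ℕ):ℝ) + (P:ℝ) := by exact_mod_cast hF3
    rw [Nat.cast_mul] at h2
    have hNN : ((N:ℝ)*(N:ℝ)) = (N:ℝ)^2 := (pow_two _).symm
    linarith [h2]
  have honem : (1 - 1/(q:ℝ)) * (N:ℝ)^2 = (N:ℝ)^2 - (N:ℝ)^2/(q:ℝ) := by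
    field_simp
  have hDlb : Vr + (P:ℝ) ≤ D := by
    rw [hDdef, honem, ← hED, hVr']
    linarith [hF2R]
  have hMR : (Mss:ℝ) = D - Vr + (P:ℝ) := by
    rw [hDdef, honem, ← hED, hVr']
    linarith [hF3R]
  have hPnn : (0:ℝ) ≤ (P:ℝ) := Nat.cast_nonneg _
  have hD0 : 0 ≤ D := by linarith
  have h2P : 2*(P:ℝ) ≤ (Mss:ℝ) := by linarith [hF2R, hF3R]
  have hMle : (Mss:ℝ) ≤ 2*(D - Vr) := by linarith
  -- reduce goal
  suffices NF : (N:ℝ) * (minDelToColorable q G : ℝ) ≤ 4*(q:ℝ)^2*D by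
    have h8 : (0:ℝ) < 8*(q:ℝ)^2 := by positivity
    have hB : (N:ℝ) * (minDelToColorable q G : ℝ) / (8*(q:ℝ)^2)
        ≤ (1 - 1/(q:ℝ))*(N:ℝ)^2/2 - (G.edgeFinset.card:ℝ) := by
      rw [div_le_iff₀ h8]
      have hring : ((1 - 1/(q:ℝ))*(N:ℝ)^2/2 - (G.edgeFinset.card:ℝ))*(8*(q:ℝ)^2)
          = 4*(q:ℝ)^2*D := by rw [hDdef]; ring
      rw [hring]
      exact NF
    linarith
  -- case split
  rcases le_or_gt ((N:ℝ)^2) (4*(q:ℝ)^2*D) with hcase | hcase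
  · have h1 : (minDelToColorable q G : ℝ) ≤ (N:ℝ) := by exact_mod_cast hminN
    have h2 : (N:ℝ) * (minDelToColorable q G : ℝ) ≤ (N:ℝ)*(N:ℝ) :=
      mul_le_mul_of_nonneg_left h1 hNpos.le
    have h3 : (N:ℝ)*(N:ℝ) = (N:ℝ)^2 := (pow_two _).symm
    linarith
  by_cases hP0 : P = 0
  · have hf0 : minDelToColorable q G = 0 := by
      refine Nat.le_zero.1 ?_
      have h := colorable_of ∅ ?_
      · simpa using h
      · intro y z hadj hpteq
        exfalso
        have hds0 : ds y = 0 := by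
          refine Finset.sum_eq_zero_iff.1 ?_ y (Finset.mem_univ y)
          rw [← hP]
          exact hP0
        have hz : z ∈ G.neighborFinset y ∩ C (pt y) := by
          rw [Finset.mem_inter, SimpleGraph.mem_neighborFinset]
          exact ⟨hadj, by rw [hpteq]; exact hpt z⟩
        rw [hds y, Finset.card_eq_zero] at hds0
        rw [hds0] at hz
        exact absurd hz (Finset.notMem_empty z)
    rw [hf0]
    have h0 : (0:ℝ) ≤ 4*(q:ℝ)^2*D := by positivity
    simpa using h0
  · -- hard regime, P ≥ 1
    have hq2 : 2 ≤ q := by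
      by_contra h
      have hq1 : q = 1 := by omega
      apply hP0
      rw [hq1] at hG
      have hbot : G = ⊥ := SimpleGraph.cliqueFree_two.1 hG
      rw [hP]
      apply Finset.sum_eq_zero
      intro y _
      rw [hds y, Finset.card_eq_zero, Finset.eq_empty_iff_forall_notMem]
      intro z hz
      have hadj : G.Adj y z := by
        rw [Finset.mem_inter, SimpleGraph.mem_neighborFinset] at hz
        exact hz.1
      rw [hbot] at hadj
      simp at hadj
    clear hineq hpartsum hP' hc2 hyid hF2 hF3 hF2R hF3R hVr' hSCR hcsumR honem hED hE hSC
    clear hcsum hmemC hminN hds hP hP0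
    clear ds E SC
    -- square-root quantities
    obtain ⟨m, hmdef⟩ : ∃ x : ℝ, x = (N:ℝ)/(q:ℝ) := ⟨_, rfl⟩
    have hqm : (q:ℝ)*m = (N:ℝ) := by
      rw [hmdef]
      field_simp
    have hm0 : 0 ≤ m := by
      rw [hmdef]
      positivity
    have hqm2 : (q:ℝ)^2*m^2 = (N:ℝ)^2 := by
      have h := congrArg (fun x : ℝ => x^2) hqm
      nlinarith only [h]
    have hMnn : (0:ℝ) ≤ (Mss:ℝ)/2 := by positivity
    obtain ⟨s, hsdef⟩ : ∃ x : ℝ, x = Real.sqrt Vr := ⟨_, rfl⟩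
    obtain ⟨t, htdef⟩ : ∃ x : ℝ, x = Real.sqrt ((Mss:ℝ)/2) := ⟨_, rfl⟩
    have hs0 : 0 ≤ s := by rw [hsdef]; exact Real.sqrt_nonneg _
    have ht0 : 0 ≤ t := by rw [htdef]; exact Real.sqrt_nonneg _
    have hs2 : s^2 = Vr := by rw [hsdef]; exact Real.sq_sqrt hVrpos
    have ht2 : t^2 = (Mss:ℝ)/2 := by rw [htdef]; exact Real.sq_sqrt hMnn
    have hst : s^2 + t^2 ≤ D := by
      rw [hs2, ht2]
      linarith only [hMle, hVrpos]
    obtain ⟨t', ht'def⟩ : ∃ x : ℝ, x = if q = 2 then 0 else t := ⟨_, rfl⟩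
    have ht'0 : 0 ≤ t' := by rw [ht'def]; split_ifs; exacts [le_refl 0, ht0]
    have ht't : t' ≤ t := by rw [ht'def]; split_ifs; exacts [ht0, le_refl t]
    obtain ⟨θ, hθdef⟩ : ∃ x : ℝ, x = (m - s - t')/2 := ⟨_, rfl⟩
    have hθpos : 0 < θ := by
      have h1 : (s+t)^2 ≤ 2*(s^2+t^2) := by nlinarith only [sq_nonneg (s-t)]
      have f1 : (q:ℝ)^2*(s+t)^2 ≤ (q:ℝ)^2*(2*(s^2+t^2)) :=
        mul_le_mul_of_nonneg_left h1 (sq_nonneg _)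
      have f2 : (q:ℝ)^2*(s^2+t^2) ≤ (q:ℝ)^2*D :=
        mul_le_mul_of_nonneg_left hst (sq_nonneg _)
      have h2 : (s+t)^2 < m^2 := by
        have hq2R : (0:ℝ) < (q:ℝ)^2 := by positivity
        nlinarith only [f1, f2, hcase, hqm2, hq2R, sq_nonneg (s+t)]
      have h3 : s + t < m := lt_of_pow_lt_pow_left₀ 2 hm0 h2
      rw [hθdef]
      linarith only [h3, ht't, ht0, hs0]
    have hms0 : 0 ≤ m - s - t' := by
      have h := hθpos
      rw [hθdef] at h
      linarith only [h]
    -- the global set of "bad" ordered cross pairs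
    obtain ⟨Bad, hBaddef⟩ : ∃ B : Finset (Fin N × Fin N), B = (Finset.univ ×ˢ Finset.univ).filter
      (fun p => pt p.1 < pt p.2 ∧ ¬ G.Adj p.1 p.2) := ⟨_, rfl⟩
    have hBad2M : 2 * Bad.card ≤ Mss := by
      obtain ⟨MissAll, hMAdef⟩ : ∃ B : Finset (Fin N × Fin N), B = Finset.univ.biUnion
        (fun y => ({y} : Finset (Fin N)) ×ˢ msF y) := ⟨_, rfl⟩
      have hdisjMA : ∀ (y : Fin N), y ∈ Finset.univ → ∀ (y' : Fin N), y' ∈ Finset.univ →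
          y ≠ y' → Disjoint (({y} : Finset (Fin N)) ×ˢ msF y)
            (({y'} : Finset (Fin N)) ×ˢ msF y') := by
        intro y _ y' _ hyy'
        rw [Finset.disjoint_left]
        intro p hp hp'
        rw [Finset.mem_product, Finset.mem_singleton] at hp hp'
        exact hyy' (hp.1 ▸ hp'.1 ▸ rfl)
      have hMAcard : MissAll.card = Mss := by
        rw [hMAdef, Finset.card_biUnion hdisjMA, hMs]
        exact Finset.sum_congr rfl (fun y _ => by
          rw [Finset.card_product, Finset.card_singleton, one_mul])
      have hsub1 : Bad ⊆ MissAll := by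
        intro p hp
        rw [hBaddef, Finset.mem_filter] at hp
        obtain ⟨-, hlt, hnadj⟩ := hp
        rw [hMAdef, Finset.mem_biUnion]
        exact ⟨p.1, Finset.mem_univ _, Finset.mem_product.2 ⟨Finset.mem_singleton_self _,
          by rw [hmsF p.1]
             exact Finset.mem_filter.2 ⟨Finset.mem_univ _, (ne_of_gt hlt), hnadj⟩⟩⟩
      have hsub2 : Bad.image Prod.swap ⊆ MissAll := by
        intro p' hp'
        rw [Finset.mem_image] at hp'
        obtain ⟨p, hp, rfl⟩ := hp'
        rw [hBaddef, Finset.mem_filter] at hp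
        obtain ⟨-, hlt, hnadj⟩ := hp
        rw [hMAdef, Finset.mem_biUnion]
        refine ⟨p.2, Finset.mem_univ _, Finset.mem_product.2 ⟨Finset.mem_singleton_self _, ?_⟩⟩
        rw [hmsF p.2]
        refine Finset.mem_filter.2 ⟨Finset.mem_univ _, ne_of_lt hlt, ?_⟩
        intro hadj
        exact hnadj hadj.symm
      have hdisjB : Disjoint Bad (Bad.image Prod.swap) := by
        rw [Finset.disjoint_left]
        intro p hp hp'
        rw [hBaddef, Finset.mem_filter] at hp
        rw [Finset.mem_image] at hp'
        obtain ⟨p0, hp0, hswap⟩ := hp'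
        rw [hBaddef, Finset.mem_filter] at hp0
        have e1 : p0.2 = p.1 := congrArg Prod.fst hswap
        have e2 : p0.1 = p.2 := congrArg Prod.snd hswap
        have h2 := hp0.2.1
        rw [e1, e2] at h2
        exact absurd hp.2.1 (asymm h2)
      have hcard2 : Bad.card + Bad.card = (Bad ∪ Bad.image Prod.swap).card := by
        rw [Finset.card_union_of_disjoint hdisjB,
          Finset.card_image_of_injective _ Prod.swap_injective]
      have hle := Finset.card_le_card (Finset.union_subset hsub1 hsub2)
      omega
    -- per same-part edge, at least one endpoint has many cross non-neighbours
    have hedge : ∀ y z, G.Adj y z → pt y = pt z →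
        2*θ ≤ ((msF y).card : ℝ) + ((msF z).card : ℝ) := by
      intro y z hadj hpteq
      suffices hj : ∃ j, ¬ j = pt y ∧
          (((G.neighborFinset y ∩ G.neighborFinset z) ∩ C j).card : ℝ) ≤ t' by
        obtain ⟨j, hji, hjcard⟩ := hj
        have hcsq : ((c j:ℝ) - m)^2 ≤ Vr := by
          rw [hmdef, hVrdef]
          exact Finset.single_le_sum (f := fun i => ((c i:ℝ) - (N:ℝ)/(q:ℝ))^2)
            (fun i _ => sq_nonneg _) (Finset.mem_univ j)
        have h1 : m - s ≤ (c j : ℝ) := by nlinarith only [hcsq, hs2, hs0]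
        have h2 : c j ≤ ((G.neighborFinset y ∩ G.neighborFinset z) ∩ C j).card
            + ((msF y).card + (msF z).card) := by
          have hsub : C j \ (G.neighborFinset y ∩ G.neighborFinset z)
              ⊆ (msF y) ∪ (msF z) := by
            intro w hw
            obtain ⟨hwC, hwU⟩ := Finset.mem_sdiff.1 hw
            have hptw : pt w = j := hptuniq w j hwC
            rw [Finset.mem_union, hmsF y, hmsF z]
            by_cases hy' : G.Adj y w
            · right
              refine Finset.mem_filter.2 ⟨Finset.mem_univ _, ?_, ?_⟩
              · rw [hptw, ← hpteq]; exact hji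
              · intro hzw
                apply hwU
                rw [Finset.mem_inter, SimpleGraph.mem_neighborFinset,
                  SimpleGraph.mem_neighborFinset]
                exact ⟨hy', hzw⟩
            · left
              refine Finset.mem_filter.2 ⟨Finset.mem_univ _, ?_, hy'⟩
              rw [hptw]; exact hji
          have hcs : (C j \ (G.neighborFinset y ∩ G.neighborFinset z)).card
              + (C j ∩ (G.neighborFinset y ∩ G.neighborFinset z)).card = c j := by
            rw [hc j]
            exact Finset.card_sdiff_add_card_inter _ _
          have hcu : (C j ∩ (G.neighborFinset y ∩ G.neighborFinset z)).card
              = ((G.neighborFinset y ∩ G.neighborFinset z) ∩ C j).card := by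
            rw [Finset.inter_comm]
          have hle := (Finset.card_le_card hsub).trans (Finset.card_union_le _ _)
          omega
        have h2R : ((c j:ℝ)) ≤ (((G.neighborFinset y ∩ G.neighborFinset z) ∩ C j).card:ℝ)
            + (((msF y).card:ℝ) + ((msF z).card:ℝ)) := by exact_mod_cast h2
        rw [hθdef]
        linarith only [h1, h2R, hjcard]
      by_cases hq2' : q = 2
      · have hUempty : G.neighborFinset y ∩ G.neighborFinset z = ∅ := by
          rw [Finset.eq_empty_iff_forall_notMem]
          intro w hw
          rw [Finset.mem_inter, SimpleGraph.mem_neighborFinset,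
            SimpleGraph.mem_neighborFinset] at hw
          refine hG {y, z, w} ?_
          rw [hq2']
          rw [SimpleGraph.is3Clique_triple_iff]
          exact ⟨hadj, hw.1, hw.2⟩
        obtain ⟨j, hj⟩ := Fintype.exists_ne_of_one_lt_card
          (by rw [Fintype.card_fin]; omega) (pt y)
        refine ⟨j, hj, ?_⟩
        rw [hUempty, ht'def, if_pos hq2']
        simp
      · -- q ≥ 3 : transversal argument
        set J : Finset (Fin q) := Finset.univ.erase (pt y) with hJdef
        have hJne : J.Nonempty := by
          obtain ⟨j, hj⟩ := Fintype.exists_ne_of_one_lt_card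
            (by rw [Fintype.card_fin]; omega) (pt y)
          exact ⟨j, Finset.mem_erase.2 ⟨hj, Finset.mem_univ _⟩⟩
        have Hfree : ∀ g : Fin q → Fin N,
            (∀ j ∈ J, g j ∈ (G.neighborFinset y ∩ G.neighborFinset z) ∩ C j) →
            ∃ j₁ ∈ J, ∃ j₂ ∈ J, j₁ < j₂ ∧ ¬ G.Adj (g j₁) (g j₂) := by
          intro g hg
          by_contra hcon
          push_neg at hcon
          have hgU : ∀ j ∈ J, G.Adj y (g j) ∧ G.Adj z (g j) := by
            intro j hj
            have hm' := hg j hj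
            rw [Finset.mem_inter, Finset.mem_inter, SimpleGraph.mem_neighborFinset,
              SimpleGraph.mem_neighborFinset] at hm'
            exact hm'.1
          have hgC : ∀ j ∈ J, g j ∈ C j := fun j hj => (Finset.mem_inter.1 (hg j hj)).2
          have hginj : Set.InjOn g J := by
            intro j₁ h₁ j₂ h₂ he
            by_contra hne
            exact Finset.disjoint_left.1 (hdisj j₁ j₂ hne) (hgC j₁ h₁) (he ▸ hgC j₂ h₂)
          refine hG (insert y (insert z (J.image g))) ⟨?_, ?_⟩
          · intro a ha b hb hne
            simp only [Finset.coe_insert, Set.mem_insert_iff, Finset.mem_coe,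
              Finset.mem_image] at ha hb
            have hadjy : ∀ w, (∃ j ∈ J, g j = w) → G.Adj y w := by
              rintro w ⟨j, hj, rfl⟩; exact (hgU j hj).1
            have hadjz : ∀ w, (∃ j ∈ J, g j = w) → G.Adj z w := by
              rintro w ⟨j, hj, rfl⟩; exact (hgU j hj).2
            rcases ha with rfl | rfl | hga
            · rcases hb with rfl | rfl | hgb
              · exact absurd rfl hne
              · exact hadj
              · exact hadjy _ hgb
            · rcases hb with rfl | rfl | hgb
              · exact hadj.symm
              · exact absurd rfl hne
              · exact hadjz _ hgb
            · rcases hb with rfl | rfl | hgb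
              · exact (hadjy _ hga).symm
              · exact (hadjz _ hga).symm
              · obtain ⟨j₁, hj₁, rfl⟩ := hga
                obtain ⟨j₂, hj₂, rfl⟩ := hgb
                have hjne : j₁ ≠ j₂ := fun h => hne (by rw [h])
                rcases lt_or_gt_of_ne hjne with hlt | hgt
                · exact hcon j₁ hj₁ j₂ hj₂ hlt
                · exact (hcon j₂ hj₂ j₁ hj₁ hgt).symm
          · have himcard : (J.image g).card = q - 1 := by
              rw [Finset.card_image_of_injOn hginj, hJdef,
                Finset.card_erase_of_mem (Finset.mem_univ _), Finset.card_univ,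
                Fintype.card_fin]
            have hzni : z ∉ J.image g := by
              intro hmem
              obtain ⟨j, hj, he⟩ := Finset.mem_image.1 hmem
              exact G.irrefl (he ▸ (hgU j hj).2)
            have hyni : y ∉ insert z (J.image g) := by
              rw [Finset.mem_insert]
              rintro (rfl | hmem)
              · exact G.irrefl hadj
              · obtain ⟨j, hj, he⟩ := Finset.mem_image.1 hmem
                exact G.irrefl (he ▸ (hgU j hj).1)
            rw [Finset.card_insert_of_notMem hyni, Finset.card_insert_of_notMem hzni,
              himcard]
            omega
        have hBadprop : ∀ (a b : Fin N) (j₁ j₂ : Fin q), j₁ ∈ J → j₂ ∈ J → j₁ < j₂ →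
            a ∈ (G.neighborFinset y ∩ G.neighborFinset z) ∩ C j₁ →
            b ∈ (G.neighborFinset y ∩ G.neighborFinset z) ∩ C j₂ →
            ¬ G.Adj a b → (a, b) ∈ Bad := by
          intro a b j₁ j₂ hj₁ hj₂ hlt ha hb hnadj
          rw [hBaddef, Finset.mem_filter]
          refine ⟨Finset.mem_product.2 ⟨Finset.mem_univ _, Finset.mem_univ _⟩, ?_, hnadj⟩
          rw [hptuniq a j₁ (Finset.mem_inter.1 ha).2, hptuniq b j₂ (Finset.mem_inter.1 hb).2]
          exact hlt
        obtain ⟨j, hjJ, hjb⟩ := transversal_bound G C hdisj J hJne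
          (fun j => (G.neighborFinset y ∩ G.neighborFinset z) ∩ C j)
          (fun j => Finset.inter_subset_right) Hfree Bad hBadprop
        refine ⟨j, (Finset.mem_erase.1 hjJ).1, ?_⟩
        have hbcast : ((((G.neighborFinset y ∩ G.neighborFinset z) ∩ C j).card:ℝ))^2
            ≤ (Bad.card:ℝ) := by exact_mod_cast hjb
        have hbm : (Bad.card:ℝ) ≤ (Mss:ℝ)/2 := by
          have hb2 : ((2*Bad.card : ℕ):ℝ) ≤ (Mss:ℝ) := by exact_mod_cast hBad2M
          push_cast at hb2
          linarith only [hb2]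
        have hcard0 : (0:ℝ) ≤ (((G.neighborFinset y ∩ G.neighborFinset z) ∩ C j).card:ℝ) :=
          Nat.cast_nonneg _
        rw [ht'def, if_neg hq2']
        nlinarith only [hbcast, hbm, ht2, ht0, hcard0]
    -- the deleted set
    obtain ⟨X, hXdef⟩ : ∃ B : Finset (Fin N),
        B = Finset.univ.filter (fun y => θ ≤ ((msF y).card:ℝ)) := ⟨_, rfl⟩
    have hfX : minDelToColorable q G ≤ X.card := by
      apply colorable_of
      intro y z hadj hpteq
      by_contra hcon
      push_neg at hcon
      obtain ⟨hy, hz⟩ := hcon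
      rw [hXdef, Finset.mem_filter] at hy hz
      have hy' : ((msF y).card:ℝ) < θ := by
        by_contra h'
        exact hy ⟨Finset.mem_univ _, not_lt.1 h'⟩
      have hz' : ((msF z).card:ℝ) < θ := by
        by_contra h'
        exact hz ⟨Finset.mem_univ _, not_lt.1 h'⟩
      linarith only [hy', hz', hedge y z hadj hpteq]
    have hXcard : (X.card:ℝ) * θ ≤ (Mss:ℝ) := by
      have h1 : ∑ _y ∈ X, θ ≤ ∑ y ∈ X, ((msF y).card:ℝ) := by
        apply Finset.sum_le_sum
        intro y hy
        rw [hXdef, Finset.mem_filter] at hy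
        exact hy.2
      have h2 : ∑ y ∈ X, ((msF y).card:ℝ) ≤ ∑ y ∈ Finset.univ, ((msF y).card:ℝ) :=
        Finset.sum_le_sum_of_subset_of_nonneg (Finset.subset_univ X)
          (fun y _ _ => by positivity)
      have h3 : ∑ y ∈ Finset.univ, ((msF y).card:ℝ) = (Mss:ℝ) := by
        rw [hMs]
        push_cast
        rfl
      rw [Finset.sum_const, nsmul_eq_mul] at h1
      linarith only [h1, h2, h3]
    -- the key inequality
    have hm4 : 4*(s^2 + t^2) ≤ m^2 := by
      have f2 : (q:ℝ)^2*(s^2+t^2) ≤ (q:ℝ)^2*D :=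
        mul_le_mul_of_nonneg_left hst (sq_nonneg _)
      have hq2R : (0:ℝ) < (q:ℝ)^2 := by positivity
      nlinarith only [f2, hcase, hqm2, hq2R]
    have hMss2t : (Mss:ℝ) = 2*t^2 := by rw [ht2]; ring
    have hkey : (N:ℝ) * (Mss:ℝ) ≤ 4*(q:ℝ)^2*D*θ := by
      rw [hθdef, hMss2t, ← hqm]
      by_cases hq2' : q = 2
      · have hQ2 : (q:ℝ) = 2 := by exact_mod_cast congrArg (Nat.cast : ℕ → ℝ) hq2'
        have core := core2h s t m hs0 ht0 hm0 hm4
        have ht'0' : t' = 0 := by rw [ht'def, if_pos hq2']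
        rw [ht'0']
        rw [ht'0'] at hms0
        have hchain : 2*(s^2+t^2)*(m - s) ≤ 2*D*(m - s) := by
          apply mul_le_mul_of_nonneg_right _ (by linarith only [hms0])
          linarith only [hst]
        have hstep : t^2*m ≤ 2*D*(m-s) := by linarith only [core, hchain]
        rw [hQ2]
        nlinarith only [hstep]
      · have hq3 : 3 ≤ q := by omega
        have hQ3 : (3:ℝ) ≤ (q:ℝ) := by exact_mod_cast hq3
        have core := core3h s t m hs0 ht0 hm0 hm4
        have ht'eq : t' = t := by rw [ht'def, if_neg hq2']
        rw [ht'eq]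
        rw [ht'eq] at hms0
        have h3qD : 3*(s^2+t^2) ≤ (q:ℝ)*D := by nlinarith only [hst, hQ3, hD0]
        have hchain : 3*(s^2+t^2)*(m - s - t) ≤ ((q:ℝ)*D)*(m - s - t) :=
          mul_le_mul_of_nonneg_right h3qD hms0
        have hfin : t^2*m ≤ (q:ℝ)*D*(m - s - t) := by linarith only [core, hchain]
        have hmul := mul_le_mul_of_nonneg_left hfin
          (by positivity : (0:ℝ) ≤ 2*(q:ℝ))
        nlinarith only [hmul]
    -- conclude
    have hXle : (X.card:ℝ) ≤ (Mss:ℝ)/θ := by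
      rw [le_div_iff₀ hθpos]
      exact hXcard
    have hfR : (minDelToColorable q G : ℝ) ≤ (X.card:ℝ) := by exact_mod_cast hfX
    have h5 : (N:ℝ)*(minDelToColorable q G : ℝ) ≤ (N:ℝ)*((Mss:ℝ)/θ) :=
      mul_le_mul_of_nonneg_left (hfR.trans hXle) hNpos.le
    have h6 : (N:ℝ)*((Mss:ℝ)/θ) ≤ 4*(q:ℝ)^2*D := by
      rw [mul_div_assoc']
      rw [div_le_iff₀ hθpos]
      linarith only [hkey]
    linarith only [h5, h6]
end

section
/- Let s > 1 be an integer and suppose there exists a Hadamard matrix of order 2s, i.e., a 2s × 2s matrix with all entries equal to +1 or −1 whose rows are pairwise orthogonal. Then R(3; 2s, s) = 4s + 1. -/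
open Finset

lemma mk_mono {N r : ℕ} (χ : Fin N → Fin N → Finset (Fin r)) (hsym : ∀ i j, χ i j = χ j i)
    (a b c : Fin N) (hab : a ≠ b) (hac : a ≠ c) (hbc : b ≠ c) (col : Fin r)
    (h1 : col ∈ χ a b) (h2 : col ∈ χ a c) (h3 : col ∈ χ b c) : HasMonoClique χ 3 := by
  refine ⟨{a, b, c}, col, ?_, ?_⟩
  · rw [card_insert_of_notMem (by simp [hab, hac]),
      card_insert_of_notMem (by simp [hbc]), card_singleton]
  · intro i hi j hj hij
    simp only [mem_insert, mem_singleton] at hi hj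
    rcases hi with rfl | rfl | rfl <;> rcases hj with rfl | rfl | rfl <;>
      first
      | exact absurd rfl hij
      | assumption
      | (rw [hsym]; assumption)

lemma mantel_ordered_s11 {V : Type*} [Fintype V] [DecidableEq V] (R : V → V → Prop)
    [DecidableRel R] (hsym : ∀ u v, R u v → R v u)
    (htri : ∀ u v w, R u v → R u w → R v w → False)
    (X : Finset V) :
    2 * ∑ u ∈ X, (X.filter (R u ·)).card ≤ X.card ^ 2 := by
  set d : V → ℕ := fun u => (X.filter (R u ·)).card with hd
  have hdisj : ∀ u v, R u v → d u + d v ≤ X.card := by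
    intro u v huv
    have hdj : Disjoint (X.filter (R u ·)) (X.filter (R v ·)) := by
      rw [Finset.disjoint_left]
      intro w hw1 hw2
      rw [mem_filter] at hw1 hw2
      exact htri u v w huv hw1.2 hw2.2
    calc d u + d v = ((X.filter (R u ·)) ∪ (X.filter (R v ·))).card :=
          (card_union_of_disjoint hdj).symm
      _ ≤ X.card := card_le_card (union_subset (filter_subset _ _) (filter_subset _ _))
  have key : 2 * ∑ u ∈ X, d u ^ 2 ≤ (∑ u ∈ X, d u) * X.card := by
    have h1 : ∀ u ∈ X, ∑ v ∈ X.filter (R u ·), (d u + d v) ≤ d u * X.card := by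
      intro u _
      calc ∑ v ∈ X.filter (R u ·), (d u + d v)
          ≤ ∑ v ∈ X.filter (R u ·), X.card := by
            refine sum_le_sum ?_
            intro v hv
            exact hdisj u v (mem_filter.1 hv).2
        _ = d u * X.card := by rw [sum_const, smul_eq_mul]
    have h2 : ∑ u ∈ X, ∑ v ∈ X.filter (R u ·), (d u + d v) = 2 * ∑ u ∈ X, d u ^ 2 := by
      have e1 : ∑ u ∈ X, ∑ v ∈ X.filter (R u ·), d u = ∑ u ∈ X, d u ^ 2 := by
        refine sum_congr rfl ?_
        intro u _
        rw [sum_const, smul_eq_mul, sq, mul_comm]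
      have e2 : ∑ u ∈ X, ∑ v ∈ X.filter (R u ·), d v = ∑ u ∈ X, d u ^ 2 := by
        have : ∀ u ∈ X, ∑ v ∈ X.filter (R u ·), d v = ∑ v ∈ X, if R u v then d v else 0 := by
          intro u _; rw [sum_filter]
        rw [sum_congr rfl this, Finset.sum_comm]
        refine sum_congr rfl ?_
        intro v _
        have : ∑ u ∈ X, (if R u v then d v else 0) = ∑ u ∈ X.filter (R v ·), d v := by
          rw [sum_filter]
          refine sum_congr rfl ?_
          intro u _
          congr 1
          simp only [eq_iff_iff]
          exact ⟨fun h => hsym u v h, fun h => hsym v u h⟩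
        rw [this, sum_const, smul_eq_mul, sq, mul_comm]
      simp_rw [sum_add_distrib]
      rw [e1, e2]; ring
    calc 2 * ∑ u ∈ X, d u ^ 2 = ∑ u ∈ X, ∑ v ∈ X.filter (R u ·), (d u + d v) := h2.symm
      _ ≤ ∑ u ∈ X, d u * X.card := sum_le_sum h1
      _ = (∑ u ∈ X, d u) * X.card := by rw [sum_mul]
  -- Cauchy-Schwarz over ℤ
  have cauchy : ((∑ u ∈ X, d u : ℕ) : ℤ) ^ 2 ≤ (X.card : ℤ) * ∑ u ∈ X, (d u : ℤ) ^ 2 := by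
    have := sq_sum_le_card_mul_sum_sq (α := ℤ) (s := X) (f := fun u => (d u : ℤ))
    simpa using this
  set E := ∑ u ∈ X, d u with hE
  rcases Nat.eq_zero_or_pos E with h0 | hpos
  · rw [h0]; positivity
  have keyZ : 2 * (∑ u ∈ X, (d u : ℤ) ^ 2) ≤ (E : ℤ) * X.card := by
    exact_mod_cast by push_cast [← hE] at key ⊢; exact_mod_cast key
  have : 2 * (E : ℤ) * E ≤ (X.card : ℤ) ^ 2 * E := by nlinarith [cauchy, keyZ]
  have hfinal : 2 * (E : ℤ) ≤ (X.card : ℤ) ^ 2 := by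
    have hEpos : (0 : ℤ) < E := by exact_mod_cast hpos
    nlinarith
  exact_mod_cast hfinal



lemma lemA {n r s : ℕ} (hs : 0 < s) (χ : Fin n → Fin n → Finset (Fin r))
    (hsym : ∀ i j, χ i j = χ j i)
    (hcard : ∀ i j, i ≠ j → (χ i j).card = s)
    (hmono : ¬ HasMonoClique χ 3)
    (X : Finset (Fin n)) (P : Finset (Fin r)) (hP : P.card < 2 * s)
    (hsub : ∀ u ∈ X, ∀ v ∈ X, u ≠ v → χ u v ⊆ P) :
    X.card ≤ 2 * s := by
  classical
  set m := X.card with hm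
  -- total ordered degree sum over colors in P
  have hswap : ∑ c ∈ P, ∑ u ∈ X, (X.filter (fun v => v ≠ u ∧ c ∈ χ u v)).card
      = s * (m * (m - 1)) := by
    have h1 : ∀ c ∈ P, ∀ u ∈ X, (X.filter (fun v => v ≠ u ∧ c ∈ χ u v)).card
        = ∑ v ∈ X, if v ≠ u ∧ c ∈ χ u v then 1 else 0 := by
      intro c _ u _
      rw [Finset.card_filter]
    calc ∑ c ∈ P, ∑ u ∈ X, (X.filter (fun v => v ≠ u ∧ c ∈ χ u v)).card
        = ∑ c ∈ P, ∑ u ∈ X, ∑ v ∈ X, if v ≠ u ∧ c ∈ χ u v then 1 else 0 := by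
          refine sum_congr rfl fun c hc => sum_congr rfl fun u hu => h1 c hc u hu
      _ = ∑ u ∈ X, ∑ v ∈ X, ∑ c ∈ P, (if v ≠ u ∧ c ∈ χ u v then 1 else 0) := by
          rw [Finset.sum_comm]
          refine sum_congr rfl fun u _ => Finset.sum_comm
      _ = ∑ u ∈ X, ∑ v ∈ X, (if v ≠ u then s else 0) := by
          refine sum_congr rfl fun u hu => sum_congr rfl fun v hv => ?_
          by_cases hvu : v ≠ u
          · rw [if_pos hvu]
            have hPfilter : P.filter (fun c => c ∈ χ u v) = χ u v := by
              apply Finset.Subset.antisymm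
              · intro c hc; exact (Finset.mem_filter.1 hc).2
              · intro c hc
                exact Finset.mem_filter.2 ⟨hsub u hu v hv (Ne.symm hvu) hc, hc⟩
            calc ∑ c ∈ P, (if v ≠ u ∧ c ∈ χ u v then 1 else 0)
                = ∑ c ∈ P, (if c ∈ χ u v then 1 else 0) :=
                  sum_congr rfl fun c _ => by simp [hvu]
              _ = (P.filter (fun c => c ∈ χ u v)).card := (Finset.card_filter _ _).symm
              _ = s := by rw [hPfilter]; exact hcard u v (Ne.symm hvu)
          · simp [hvu]
      _ = ∑ u ∈ X, s * (m - 1) := by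
          refine sum_congr rfl fun u hu => ?_
          rw [Finset.sum_ite, Finset.sum_const, Finset.sum_const]
          simp only [smul_eq_mul, mul_one, mul_zero, add_zero]
          have : X.filter (fun v => v ≠ u) = X.erase u := by
            ext v; simp [Finset.mem_erase, and_comm]
          rw [this, Finset.card_erase_of_mem hu, mul_comm]
      _ = s * (m * (m - 1)) := by rw [Finset.sum_const, smul_eq_mul]; ring
  -- Mantel bound for each color
  have hmantel : ∀ c : Fin r, 2 * ∑ u ∈ X, (X.filter (fun v => v ≠ u ∧ c ∈ χ u v)).card
      ≤ m ^ 2 := by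
    intro c
    refine mantel_ordered_s11 (fun u v => v ≠ u ∧ c ∈ χ u v) ?_ ?_ X
    · intro u v ⟨h1, h2⟩; exact ⟨h1.symm, by rwa [hsym]⟩
    · rintro u v w ⟨hvu, h1⟩ ⟨hwu, h2⟩ ⟨hwv, h3⟩
      exact hmono (mk_mono χ hsym u v w (Ne.symm hvu) (Ne.symm hwu) (Ne.symm hwv) c h1 h2 h3)
  have htotal : 2 * (s * (m * (m - 1))) ≤ P.card * m ^ 2 := by
    calc 2 * (s * (m * (m - 1)))
        = ∑ c ∈ P, 2 * ∑ u ∈ X, (X.filter (fun v => v ≠ u ∧ c ∈ χ u v)).card := by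
          rw [← Finset.mul_sum, hswap]
      _ ≤ ∑ c ∈ P, m ^ 2 := sum_le_sum fun c _ => hmantel c
      _ = P.card * m ^ 2 := by rw [Finset.sum_const, smul_eq_mul]
  by_contra hcon
  push_neg at hcon
  obtain ⟨k, hk⟩ : ∃ k, m = 2 * s + 1 + k := ⟨m - (2 * s + 1), by omega⟩
  rw [hk] at htotal
  have hm' : 2 * s + 1 + k - 1 = 2 * s + k := by omega
  rw [hm'] at htotal
  nlinarith [htotal, hP, hs]



section
variable {s : ℕ} (χ : Fin (4*s+1) → Fin (4*s+1) → Finset (Fin (2*s)))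

lemma degree_reg (hs : 1 < s) (hsym : ∀ i j, χ i j = χ j i)
    (hcard : ∀ i j, i ≠ j → (χ i j).card = s)
    (hmono : ¬ HasMonoClique χ 3)
    (v : Fin (4*s+1)) (c : Fin (2*s)) :
    (univ.filter (fun u => u ≠ v ∧ c ∈ χ v u)).card = 2 * s := by
  classical
  have hs0 : 0 < s := by omega
  set d : Fin (2*s) → ℕ := fun c' => (univ.filter (fun u => u ≠ v ∧ c' ∈ χ v u)).card with hd
  -- upper bound for every color
  have hle : ∀ c' : Fin (2*s), d c' ≤ 2 * s := by
    intro c'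
    refine lemA hs0 χ hsym hcard hmono _ (univ.erase c') ?_ ?_
    · rw [card_erase_of_mem (mem_univ _)]
      simp only [card_univ, Fintype.card_fin]
      omega
    · intro u hu w hw huw
      rw [mem_filter] at hu hw
      intro x hx
      rw [mem_erase]
      refine ⟨fun hxc => ?_, mem_univ x⟩
      subst hxc
      exact hmono (mk_mono χ hsym v u w (Ne.symm hu.2.1) (Ne.symm hw.2.1) huw x
        hu.2.2 hw.2.2 hx)
  -- sum over colors
  have hsum : ∑ c' : Fin (2*s), d c' = 4 * s * s := by
    have h1 : ∀ c' : Fin (2*s), d c' = ∑ u : Fin (4*s+1), if u ≠ v ∧ c' ∈ χ v u then 1 else 0 :=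
      fun c' => Finset.card_filter _ _
    calc ∑ c' : Fin (2*s), d c'
        = ∑ c' : Fin (2*s), ∑ u : Fin (4*s+1), if u ≠ v ∧ c' ∈ χ v u then 1 else 0 :=
          sum_congr rfl fun c' _ => h1 c'
      _ = ∑ u : Fin (4*s+1), ∑ c' : Fin (2*s), if u ≠ v ∧ c' ∈ χ v u then 1 else 0 :=
          Finset.sum_comm
      _ = ∑ u : Fin (4*s+1), if u ≠ v then s else 0 := by
          refine sum_congr rfl fun u _ => ?_
          by_cases huv : u ≠ v
          · rw [if_pos huv]
            calc ∑ c' : Fin (2*s), (if u ≠ v ∧ c' ∈ χ v u then 1 else 0)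
                = ∑ c' : Fin (2*s), (if c' ∈ χ v u then 1 else 0) :=
                  sum_congr rfl fun c' _ => by simp [huv]
              _ = (univ.filter (· ∈ χ v u)).card := (Finset.card_filter _ _).symm
              _ = (χ v u).card := by congr 1; ext x; simp
              _ = s := hcard v u (Ne.symm huv)
          · simp [huv]
      _ = 4 * s * s := by
          rw [← Finset.sum_filter]
          have he : (univ.filter (fun u : Fin (4*s+1) => u ≠ v)) = univ.erase v := by
            ext u; simp [Finset.mem_erase]
          rw [he, sum_const, card_erase_of_mem (mem_univ _), smul_eq_mul]
          simp only [card_univ, Fintype.card_fin]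
          have h41 : 4*s+1-1 = 4*s := by omega
          rw [h41]
  -- conclusion
  have hsplit : d c + ∑ c' ∈ univ.erase c, d c' = 4 * s * s := by
    rw [Finset.add_sum_erase _ _ (mem_univ c)]; exact hsum
  have hT : ∑ c' ∈ univ.erase c, d c' ≤ (2*s - 1) * (2*s) := by
    have := Finset.sum_le_card_nsmul (univ.erase c) d (2*s) (fun c' _ => hle c')
    rwa [card_erase_of_mem (mem_univ _), card_univ, Fintype.card_fin, smul_eq_mul] at this
  have hq : (2*s - 1) * (2*s) + 2*s = 4 * s * s := by
    have h1 : 2*s - 1 + 1 = 2*s := by omega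
    calc (2*s - 1) * (2*s) + 2*s = (2*s - 1 + 1) * (2*s) := by ring
      _ = 4 * s * s := by rw [h1]; ring
  have := hle c
  linarith [hsplit, hT, hq]

lemma forced (hs : 1 < s) (hsym : ∀ i j, χ i j = χ j i)
    (hcard : ∀ i j, i ≠ j → (χ i j).card = s) :
    HasMonoClique χ 3 := by
  classical
  by_contra hmono
  have hs0 : 0 < s := by omega
  have hv0 : 0 < 4*s+1 := by omega
  have hc0 : 0 < 2*s := by omega
  set v : Fin (4*s+1) := ⟨0, hv0⟩ with hv
  set c : Fin (2*s) := ⟨0, hc0⟩ with hc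
  set N : Finset (Fin (4*s+1)) := univ.filter (fun u => u ≠ v ∧ c ∈ χ v u) with hN
  have hNcard : N.card = 2 * s := degree_reg χ hs hsym hcard hmono v c
  have hvN : v ∉ N := by simp [hN]
  set M : Finset (Fin (4*s+1)) := univ \ insert v N with hM
  have hMcard : M.card = 2 * s := by
    rw [hM, card_sdiff_of_subset (subset_univ _), card_insert_of_notMem hvN, hNcard,
      card_univ, Fintype.card_fin]
    omega
  -- membership facts
  have hmemN : ∀ u, u ∈ N ↔ (u ≠ v ∧ c ∈ χ v u) := by intro u; simp [hN]
  have hmemM : ∀ u, u ∈ M ↔ (u ≠ v ∧ c ∉ χ v u) := by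
    intro u
    simp only [hM, mem_sdiff, mem_univ, true_and, mem_insert, hmemN]
    constructor
    · intro h
      rcases Decidable.em (u = v) with h1 | h1
      · exact absurd (Or.inl h1) h
      · exact ⟨h1, fun hcu => h (Or.inr ⟨h1, hcu⟩)⟩
    · rintro ⟨h1, h2⟩ (h3 | ⟨_, h4⟩)
      · exact h1 h3
      · exact h2 h4
  -- neighborhoods
  set A : Fin (4*s+1) → Finset (Fin (4*s+1)) :=
    fun w => univ.filter (fun y => y ≠ w ∧ c ∈ χ w y) with hA
  have hAcard : ∀ w, (A w).card = 2 * s := fun w => degree_reg χ hs hsym hcard hmono w c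
  have hmemA : ∀ w y, y ∈ A w ↔ (y ≠ w ∧ c ∈ χ w y) := by intro w y; simp [hA]
  -- no edges inside N
  have hNfree : ∀ u ∈ N, ∀ w ∈ N, u ≠ w → c ∉ χ u w := by
    intro u hu w hw huw hc'
    rw [hmemN] at hu hw
    exact hmono (mk_mono χ hsym v u w (Ne.symm hu.1) (Ne.symm hw.1) huw c hu.2 hw.2 hc')
  -- for u ∈ N : A u = insert v ((A u).filter (· ∈ M))
  have hAN : ∀ u ∈ N, A u = insert v ((A u).filter (· ∈ M)) := by
    intro u hu
    have huv : u ≠ v := ((hmemN u).1 hu).1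
    ext y
    simp only [mem_insert, mem_filter]
    constructor
    · intro hy
      rcases Decidable.em (y = v) with rfl | hyv
      · exact Or.inl rfl
      · refine Or.inr ⟨hy, ?_⟩
        rw [hmemM]
        refine ⟨hyv, fun hcy => ?_⟩
        -- y ∈ N and y ∈ A u : edge inside N
        rw [hmemA] at hy
        have hyN : y ∈ N := (hmemN y).2 ⟨hyv, hcy⟩
        exact hNfree u hu y hyN (Ne.symm hy.1) hy.2
    · rintro (rfl | ⟨hy, _⟩)
      · rw [hmemA]
        exact ⟨Ne.symm huv, by rw [hsym]; exact ((hmemN u).1 hu).2⟩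
      · exact hy
  have hAMu : ∀ u ∈ N, ((A u).filter (· ∈ M)).card = 2*s - 1 := by
    intro u hu
    have h1 := hAcard u
    rw [hAN u hu, card_insert_of_notMem (by
      intro hvmem
      rw [mem_filter, hmemM] at hvmem
      exact hvmem.2.1 rfl)] at h1
    omega
  -- for w ∈ M : split of A w
  have hAM : ∀ w ∈ M, ((A w).filter (· ∈ N)).card + ((A w).filter (· ∈ M)).card = 2 * s := by
    intro w hw
    have hvA : v ∉ A w := by
      rw [hmemA]
      rintro ⟨hvw, hcv⟩
      rw [hsym] at hcv
      exact ((hmemM w).1 hw).2 hcv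
    have hsplit : (A w).filter (· ∈ N) ∪ (A w).filter (· ∈ M) = A w := by
      ext y
      simp only [mem_union, mem_filter]
      constructor
      · rintro (⟨h, _⟩ | ⟨h, _⟩) <;> exact h
      · intro hy
        rcases Decidable.em (y ∈ N) with h1 | h1
        · exact Or.inl ⟨hy, h1⟩
        · refine Or.inr ⟨hy, ?_⟩
          rw [hmemM]
          have hyv : y ≠ v := by rintro rfl; exact hvA hy
          refine ⟨hyv, fun hcy => h1 ((hmemN y).2 ⟨hyv, hcy⟩)⟩
    have hdisj : Disjoint ((A w).filter (· ∈ N)) ((A w).filter (· ∈ M)) := by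
      rw [Finset.disjoint_left]
      intro y h1 h2
      rw [mem_filter] at h1 h2
      rw [hmemM] at h2
      rw [hmemN] at h1
      exact h2.2.2 h1.2.2
    rw [← card_union_of_disjoint hdisj, hsplit, hAcard]
  -- double counting N-M edges
  have hdouble : ∑ u ∈ N, ((A u).filter (· ∈ M)).card = ∑ w ∈ M, ((A w).filter (· ∈ N)).card := by
    have hL : ∀ u, ((A u).filter (· ∈ M)) = M.filter (fun y => y ≠ u ∧ c ∈ χ u y) := by
      intro u; ext y
      simp only [mem_filter, hmemA]
      tauto
    have hR : ∀ w, ((A w).filter (· ∈ N)) = N.filter (fun y => y ≠ w ∧ c ∈ χ w y) := by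
      intro w; ext y
      simp only [mem_filter, hmemA]
      tauto
    calc ∑ u ∈ N, ((A u).filter (· ∈ M)).card
        = ∑ u ∈ N, ∑ w ∈ M, (if w ≠ u ∧ c ∈ χ u w then 1 else 0) := by
          refine sum_congr rfl fun u _ => ?_
          rw [hL u, Finset.card_filter]
      _ = ∑ w ∈ M, ∑ u ∈ N, (if w ≠ u ∧ c ∈ χ u w then 1 else 0) := Finset.sum_comm
      _ = ∑ w ∈ M, ∑ u ∈ N, (if u ≠ w ∧ c ∈ χ w u then 1 else 0) := by
          refine sum_congr rfl fun w hw => sum_congr rfl fun u hu => ?_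
          congr 1
          simp only [eq_iff_iff]
          constructor
          · rintro ⟨h1, h2⟩; exact ⟨fun h => h1 h.symm, by rwa [hsym]⟩
          · rintro ⟨h1, h2⟩; exact ⟨fun h => h1 h.symm, by rwa [hsym]⟩
      _ = ∑ w ∈ M, ((A w).filter (· ∈ N)).card := by
          refine sum_congr rfl fun w _ => ?_
          rw [hR w, Finset.card_filter]
  -- degrees within M
  have hsumN : ∑ u ∈ N, ((A u).filter (· ∈ M)).card = 2*s*(2*s - 1) := by
    calc ∑ u ∈ N, ((A u).filter (· ∈ M)).card = ∑ u ∈ N, (2*s - 1) :=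
          sum_congr rfl fun u hu => hAMu u hu
      _ = 2*s*(2*s-1) := by rw [sum_const, smul_eq_mul, hNcard]
  have hsumM : ∑ w ∈ M, ((A w).filter (· ∈ M)).card = 2*s := by
    have h1 : ∑ w ∈ M, (((A w).filter (· ∈ N)).card + ((A w).filter (· ∈ M)).card)
        = 2*s*(2*s) := by
      rw [sum_congr rfl (fun w hw => hAM w hw), sum_const, smul_eq_mul, hMcard]
    rw [sum_add_distrib] at h1
    rw [← hdouble, hsumN] at h1
    have hkey : 2*s*(2*s-1) + 2*s = 2*s*(2*s) := by
      have h3 : 2*s - 1 + 1 = 2*s := by omega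
      calc 2*s*(2*s-1) + 2*s = 2*s*((2*s-1)+1) := by ring
        _ = 2*s*(2*s) := by rw [h3]
    linarith
  -- existence of an edge inside M
  have hedge : ∃ w ∈ M, ∃ x ∈ (A w).filter (· ∈ M), True := by
    by_contra h
    push_neg at h
    have : ∑ w ∈ M, ((A w).filter (· ∈ M)).card = 0 := by
      refine sum_eq_zero fun w hw => ?_
      rw [card_eq_zero]
      rw [eq_empty_iff_forall_notMem]
      intro x hx
      exact h w hw x hx
    omega
  obtain ⟨w, hwM, x, hx, -⟩ := hedge
  rw [mem_filter] at hx
  obtain ⟨hxA, hxM⟩ := hx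
  rw [hmemA] at hxA
  obtain ⟨hxw, hcwx⟩ := hxA
  -- N-neighborhoods of adjacent w, x are disjoint
  have hNdisj : ((A w).filter (· ∈ N)).card + ((A x).filter (· ∈ N)).card ≤ 2 * s := by
    have hdj : Disjoint ((A w).filter (· ∈ N)) ((A x).filter (· ∈ N)) := by
      rw [Finset.disjoint_left]
      intro y h1 h2
      rw [mem_filter, hmemA] at h1 h2
      -- triangle w x y
      have hyN : y ∈ N := h1.2
      have hyw : y ≠ w := h1.1.1
      have hyx : y ≠ x := h2.1.1
      have hyM : y ∉ M := by
        intro hyM'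
        rw [hmemM] at hyM'
        rw [hmemN] at hyN
        exact hyM'.2 hyN.2
      exact hmono (mk_mono χ hsym w x y hxw.symm (Ne.symm hyw) (Ne.symm hyx) c
        hcwx h1.1.2 h2.1.2)
    calc ((A w).filter (· ∈ N)).card + ((A x).filter (· ∈ N)).card
        = (((A w).filter (· ∈ N)) ∪ ((A x).filter (· ∈ N))).card :=
          (card_union_of_disjoint hdj).symm
      _ ≤ N.card := card_le_card (by
          intro y hy
          rw [mem_union] at hy
          rcases hy with h | h <;> exact (mem_filter.1 h).2)
      _ = 2 * s := hNcard
  -- hence M-degrees of w and x sum to at least 2s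
  have hge : 2*s ≤ ((A w).filter (· ∈ M)).card + ((A x).filter (· ∈ M)).card := by
    have h1 := hAM w hwM
    have h2 := hAM x hxM
    omega
  -- sum over M is exactly 2s, so all other vertices have M-degree 0
  have hxwM : w ≠ x := Ne.symm hxw
  have hsub2 : ((A w).filter (· ∈ M)).card + ((A x).filter (· ∈ M)).card
      ≤ ∑ u ∈ M, ((A u).filter (· ∈ M)).card := by
    have : ∑ u ∈ ({w, x} : Finset (Fin (4*s+1))), ((A u).filter (· ∈ M)).card
        ≤ ∑ u ∈ M, ((A u).filter (· ∈ M)).card := by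
      refine sum_le_sum_of_subset ?_
      intro y hy
      rw [mem_insert, mem_singleton] at hy
      rcases hy with rfl | rfl <;> assumption
    rwa [sum_pair hxwM] at this
  have hzero : ∀ y ∈ M, y ≠ w → y ≠ x → ((A y).filter (· ∈ M)).card = 0 := by
    intro y hyM hyw hyx
    by_contra h0
    have h1 : 1 ≤ ((A y).filter (· ∈ M)).card := by omega
    have : ∑ u ∈ ({w, x, y} : Finset (Fin (4*s+1))), ((A u).filter (· ∈ M)).card
        ≤ ∑ u ∈ M, ((A u).filter (· ∈ M)).card := by
      refine sum_le_sum_of_subset ?_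
      intro z hz
      simp only [mem_insert, mem_singleton] at hz
      rcases hz with rfl | rfl | rfl <;> assumption
    rw [sum_insert (by simp [hxwM, (Ne.symm hyw : w ≠ y)]), sum_pair (Ne.symm hyx)] at this
    omega
  -- neighbors of w in M are only x ; similarly for x
  have hwle : ((A w).filter (· ∈ M)).card ≤ 1 := by
    have hsub3 : ((A w).filter (· ∈ M)) ⊆ {x} := by
      intro y hy
      rw [mem_filter, hmemA] at hy
      rw [mem_singleton]
      by_contra hyx
      have hyw : y ≠ w := hy.1.1
      have h0 := hzero y hy.2 hyw hyx
      have : w ∈ (A y).filter (· ∈ M) := by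
        rw [mem_filter, hmemA]
        exact ⟨⟨Ne.symm hyw, by rw [hsym]; exact hy.1.2⟩, hwM⟩
      rw [card_eq_zero] at h0
      rw [h0] at this
      exact notMem_empty _ this
    calc ((A w).filter (· ∈ M)).card ≤ ({x} : Finset _).card := card_le_card hsub3
      _ = 1 := card_singleton _
  have hxle : ((A x).filter (· ∈ M)).card ≤ 1 := by
    have hsub3 : ((A x).filter (· ∈ M)) ⊆ {w} := by
      intro y hy
      rw [mem_filter, hmemA] at hy
      rw [mem_singleton]
      by_contra hyw
      have hyx : y ≠ x := hy.1.1
      have h0 := hzero y hy.2 hyw hyx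
      have : x ∈ (A y).filter (· ∈ M) := by
        rw [mem_filter, hmemA]
        exact ⟨⟨Ne.symm hyx, by rw [hsym]; exact hy.1.2⟩, hxM⟩
      rw [card_eq_zero] at h0
      rw [h0] at this
      exact notMem_empty _ this
    calc ((A x).filter (· ∈ M)).card ≤ ({w} : Finset _).card := card_le_card hsub3
      _ = 1 := card_singleton _
  omega

end



def rowOf (s : ℕ) (i : Fin (4 * s)) : Fin (2 * s) :=
  if h : (i : ℕ) < 2 * s then ⟨i, h⟩ else ⟨(i : ℕ) - 2 * s, by omega⟩

lemma rowOf_val (s : ℕ) (i : Fin (4 * s)) :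
    ((rowOf s i : Fin (2 * s)) : ℕ) = if (i : ℕ) < 2 * s then (i : ℕ) else (i : ℕ) - 2 * s := by
  unfold rowOf; split <;> rfl

def vec (s : ℕ) (H : Matrix (Fin (2 * s)) (Fin (2 * s)) ℝ) (i : Fin (4 * s))
    (k : Fin (2 * s)) : ℝ :=
  (if (i : ℕ) < 2 * s then 1 else -1) * H (rowOf s i) k

noncomputable def hadColoring (s : ℕ) (H : Matrix (Fin (2 * s)) (Fin (2 * s)) ℝ) :
    Fin (4 * s) → Fin (4 * s) → Finset (Fin (2 * s)) :=
  fun i j => if rowOf s i = rowOf s j then univ.filter (fun k : Fin (2 * s) => (k : ℕ) < s)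
    else univ.filter (fun k => vec s H i k ≠ vec s H j k)

section lower
variable {s : ℕ} (H : Matrix (Fin (2 * s)) (Fin (2 * s)) ℝ)

lemma vec_pm (hent : ∀ i j, H i j = 1 ∨ H i j = -1) (i : Fin (4 * s)) (k : Fin (2 * s)) :
    vec s H i k = 1 ∨ vec s H i k = -1 := by
  unfold vec
  rcases hent (rowOf s i) k with h | h <;> rw [h] <;>
    by_cases h2 : (i : ℕ) < 2 * s <;> simp [h2]

lemma vec_ne_zero (hent : ∀ i j, H i j = 1 ∨ H i j = -1) (i : Fin (4 * s)) (k : Fin (2 * s)) :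
    vec s H i k ≠ 0 := by
  rcases vec_pm H hent i k with h | h <;> rw [h] <;> norm_num

lemma pm_ne {x y : ℝ} (hx : x = 1 ∨ x = -1) (hy : y = 1 ∨ y = -1) (hxy : x ≠ y) :
    y = -x := by rcases hx with rfl | rfl <;> rcases hy with rfl | rfl <;> simp_all

lemma antipodal {i j : Fin (4 * s)} (hij : i ≠ j) (hrow : rowOf s i = rowOf s j)
    (k : Fin (2 * s)) : vec s H j k = - vec s H i k := by
  have hv : (i : ℕ) ≠ (j : ℕ) := fun h => hij (Fin.ext h)
  have hi4 : (i : ℕ) < 4 * s := i.isLt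
  have hj4 : (j : ℕ) < 4 * s := j.isLt
  have hval : ((rowOf s i : Fin (2*s)) : ℕ) = ((rowOf s j : Fin (2*s)) : ℕ) :=
    congrArg Fin.val hrow
  rw [rowOf_val, rowOf_val] at hval
  by_cases h1 : (i : ℕ) < 2 * s <;> by_cases h2 : (j : ℕ) < 2 * s <;>
    simp only [h1, h2, if_true, if_false, ite_true, ite_false] at hval
  · exact absurd hval hv
  · unfold vec
    rw [if_pos h1, if_neg h2, hrow]
    ring
  · unfold vec
    rw [if_neg h1, if_pos h2, hrow]
    ring
  · omega

lemma row_two {i j t : Fin (4 * s)} (hij : i ≠ j) (hit : i ≠ t) (hjt : j ≠ t)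
    (h1 : rowOf s i = rowOf s j) (h2 : rowOf s i = rowOf s t) : False := by
  have hvij : (i : ℕ) ≠ (j : ℕ) := fun h => hij (Fin.ext h)
  have hvit : (i : ℕ) ≠ (t : ℕ) := fun h => hit (Fin.ext h)
  have hvjt : (j : ℕ) ≠ (t : ℕ) := fun h => hjt (Fin.ext h)
  have hi4 : (i : ℕ) < 4 * s := i.isLt
  have hj4 : (j : ℕ) < 4 * s := j.isLt
  have ht4 : (t : ℕ) < 4 * s := t.isLt
  have e1 := congrArg Fin.val h1
  have e2 := congrArg Fin.val h2
  rw [rowOf_val, rowOf_val] at e1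
  rw [rowOf_val, rowOf_val] at e2
  split_ifs at e1 e2 <;> omega

lemma orth (hH : H * H.transpose = (2 * s : ℝ) • 1) {i j : Fin (4 * s)}
    (hrow : rowOf s i ≠ rowOf s j) :
    ∑ k, vec s H i k * vec s H j k = 0 := by
  unfold vec
  have h1 : ∑ k, ((if (i : ℕ) < 2 * s then (1:ℝ) else -1) * H (rowOf s i) k) *
      ((if (j : ℕ) < 2 * s then (1:ℝ) else -1) * H (rowOf s j) k)
      = (if (i : ℕ) < 2 * s then (1:ℝ) else -1) * (if (j : ℕ) < 2 * s then (1:ℝ) else -1) *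
        ∑ k, H (rowOf s i) k * H (rowOf s j) k := by
    rw [Finset.mul_sum]
    refine Finset.sum_congr rfl fun k _ => by ring
  rw [h1]
  have h2 : ∑ k, H (rowOf s i) k * H (rowOf s j) k
      = (H * H.transpose) (rowOf s i) (rowOf s j) := by
    rw [Matrix.mul_apply]
    exact Finset.sum_congr rfl fun k _ => by rw [Matrix.transpose_apply]
  rw [h2, hH]
  have h3 : ((2 * s : ℝ) • (1 : Matrix (Fin (2*s)) (Fin (2*s)) ℝ)) (rowOf s i) (rowOf s j)
      = 0 := by
    rw [Matrix.smul_apply, Matrix.one_apply_ne hrow, smul_zero]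
  rw [h3, mul_zero]

lemma diff_card (hent : ∀ i j, H i j = 1 ∨ H i j = -1)
    (hH : H * H.transpose = (2 * s : ℝ) • 1) {i j : Fin (4 * s)}
    (hrow : rowOf s i ≠ rowOf s j) :
    (univ.filter (fun k => vec s H i k ≠ vec s H j k)).card = s := by
  classical
  set D := univ.filter (fun k => vec s H i k ≠ vec s H j k) with hD
  have hprod : ∀ k, vec s H i k * vec s H j k
      = if vec s H i k = vec s H j k then (1:ℝ) else -1 := by
    intro k
    rcases vec_pm H hent i k with h1 | h1 <;> rcases vec_pm H hent j k with h2 | h2 <;>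
      rw [h1, h2] <;> norm_num
  have hsum : ∑ k, (if vec s H i k = vec s H j k then (1:ℝ) else -1) = 0 := by
    rw [← orth H hH hrow]
    exact Finset.sum_congr rfl fun k _ => (hprod k).symm
  have hsplit : ∑ k, (if vec s H i k = vec s H j k then (1:ℝ) else -1)
      = ((univ.filter (fun k => vec s H i k = vec s H j k)).card : ℝ) + (D.card : ℝ) * (-1) := by
    rw [Finset.sum_ite, Finset.sum_const, Finset.sum_const]
    have hneg : univ.filter (fun k => ¬ vec s H i k = vec s H j k) = D := rfl
    rw [hneg]
    push_cast
    ring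
  have hcompl : (univ.filter (fun k => vec s H i k = vec s H j k)).card + D.card = 2 * s := by
    have h := Finset.card_filter_add_card_filter_not
      (s := (univ : Finset (Fin (2*s)))) (p := fun k => vec s H i k = vec s H j k)
    rw [card_univ, Fintype.card_fin] at h
    exact h
  have hEq : ((univ.filter (fun k => vec s H i k = vec s H j k)).card : ℝ) = (D.card : ℝ) := by
    rw [hsplit] at hsum
    linarith
  have hfin : (univ.filter (fun k => vec s H i k = vec s H j k)).card = D.card := by
    exact_mod_cast hEq
  omega

lemma had_symm : ∀ i j, hadColoring s H i j = hadColoring s H j i := by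
  intro i j
  unfold hadColoring
  by_cases h : rowOf s i = rowOf s j
  · rw [if_pos h, if_pos h.symm]
  · rw [if_neg h, if_neg (fun h' => h h'.symm)]
    ext k
    simp only [mem_filter, mem_univ, true_and]
    exact ne_comm

lemma had_card (hent : ∀ i j, H i j = 1 ∨ H i j = -1)
    (hH : H * H.transpose = (2 * s : ℝ) • 1) (hs : 0 < s) :
    ∀ i j : Fin (4 * s), i ≠ j → (hadColoring s H i j).card = s := by
  intro i j hij
  unfold hadColoring
  by_cases h : rowOf s i = rowOf s j
  · rw [if_pos h]
    have heq : univ.filter (fun k : Fin (2 * s) => (k : ℕ) < s)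
        = Finset.Iio (⟨s, by omega⟩ : Fin (2 * s)) := by
      ext k
      simp [Finset.mem_Iio, Fin.lt_def]
    rw [heq, Fin.card_Iio]
  · rw [if_neg h]
    exact diff_card H hent hH h

lemma had_no_mono (hent : ∀ i j, H i j = 1 ∨ H i j = -1)
    (hH : H * H.transpose = (2 * s : ℝ) • 1) :
    ¬ HasMonoClique (hadColoring s H) 3 := by
  rintro ⟨S, k, hcard, hmem⟩
  rw [Finset.card_eq_three] at hcard
  obtain ⟨a, b, c, hab, hac, hbc, rfl⟩ := hcard
  have ha : a ∈ ({a, b, c} : Finset (Fin (4*s))) := by simp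
  have hb : b ∈ ({a, b, c} : Finset (Fin (4*s))) := by simp
  have hc : c ∈ ({a, b, c} : Finset (Fin (4*s))) := by simp
  have h1 := hmem a ha b hb hab
  have h2 := hmem a ha c hc hac
  have h3 := hmem b hb c hc hbc
  have hdiff : ∀ i j : Fin (4*s), rowOf s i ≠ rowOf s j → k ∈ hadColoring s H i j →
      vec s H i k ≠ vec s H j k := by
    intro i j hrow hk
    unfold hadColoring at hk
    rw [if_neg hrow, mem_filter] at hk
    exact hk.2
  have hpair : ∀ i j t : Fin (4*s), i ≠ j → rowOf s i = rowOf s j → rowOf s t ≠ rowOf s i →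
      k ∈ hadColoring s H i t → k ∈ hadColoring s H j t → False := by
    intro i j t hij hrow hrowt hk1 hk2
    have hrit : rowOf s i ≠ rowOf s t := fun h => hrowt h.symm
    have hrjt : rowOf s j ≠ rowOf s t := fun h => hrowt (h.symm.trans hrow.symm)
    have d1 := hdiff i t hrit hk1
    have d2 := hdiff j t hrjt hk2
    have e1 : vec s H t k = - vec s H i k :=
      pm_ne (vec_pm H hent i k) (vec_pm H hent t k) d1
    have e2 : vec s H t k = - vec s H j k :=
      pm_ne (vec_pm H hent j k) (vec_pm H hent t k) d2
    have e3 := antipodal H hij hrow k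
    rw [e3] at e2
    rw [e1] at e2
    have h0 : vec s H i k = 0 := by linarith
    exact vec_ne_zero H hent i k h0
  by_cases r1 : rowOf s a = rowOf s b
  · by_cases r2 : rowOf s c = rowOf s a
    · exact row_two hab hac hbc r1 r2.symm
    · exact hpair a b c hab r1 r2 h2 h3
  · by_cases r2 : rowOf s a = rowOf s c
    · have h3' : k ∈ hadColoring s H c b := by rw [had_symm H]; exact h3
      have r3 : rowOf s b ≠ rowOf s a := fun h => r1 h.symm
      exact hpair a c b hac r2 r3 h1 h3'
    · by_cases r3 : rowOf s b = rowOf s c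
      · have h1' : k ∈ hadColoring s H b a := by rw [had_symm H]; exact h1
        have h2' : k ∈ hadColoring s H c a := by rw [had_symm H]; exact h2
        exact hpair b c a hbc r3 r1 h1' h2'
      · have d1 := hdiff a b r1 h1
        have d2 := hdiff a c r2 h2
        have d3 := hdiff b c r3 h3
        have e1 : vec s H b k = - vec s H a k :=
          pm_ne (vec_pm H hent a k) (vec_pm H hent b k) d1
        have e2 : vec s H c k = - vec s H a k :=
          pm_ne (vec_pm H hent a k) (vec_pm H hent c k) d2
        rw [e1, e2] at d3
        exact d3 rfl

end lower

lemma restrict_no_mono {r N M : ℕ} (h : N ≤ M) (χ : Fin M → Fin M → Finset (Fin r))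
    (hmono : ¬ HasMonoClique χ 3) :
    ¬ HasMonoClique (fun i j : Fin N => χ (Fin.castLE h i) (Fin.castLE h j)) 3 := by
  rintro ⟨S, c, hcard, hmem⟩
  refine hmono ⟨S.image (Fin.castLE h), c, ?_, ?_⟩
  · rw [Finset.card_image_of_injective _ (Fin.castLE_injective h)]
    exact hcard
  · intro i hi j hj hij
    rw [Finset.mem_image] at hi hj
    obtain ⟨i', hi', rfl⟩ := hi
    obtain ⟨j', hj', rfl⟩ := hj
    exact hmem i' hi' j' hj' (fun h' => hij (congrArg _ h'))

/-- If `s > 1` and there is a Hadamard matrix of order `2s`, then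
`R(3; 2s, s) = 4s + 1`. -/
theorem ramsey_three_hadamard (s : ℕ) (hs : 1 < s)
    (H : Matrix (Fin (2 * s)) (Fin (2 * s)) ℝ)
    (hent : ∀ i j, H i j = 1 ∨ H i j = -1)
    (hH : H * H.transpose = (2 * s : ℝ) • 1) :
    setRamsey 3 (2 * s) s = 4 * s + 1 := by
  have hs0 : 0 < s := by omega
  have hmem : (4 * s + 1) ∈ {N : ℕ | ∀ χ : Fin N → Fin N → Finset (Fin (2 * s)),
      IsSetColoring N (2 * s) s χ → HasMonoClique χ 3} := by
    intro χ hχ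
    exact forced χ hs hχ.1 hχ.2
  have hlow : ∀ N ∈ {N : ℕ | ∀ χ : Fin N → Fin N → Finset (Fin (2 * s)),
      IsSetColoring N (2 * s) s χ → HasMonoClique χ 3}, 4 * s + 1 ≤ N := by
    intro N hN
    by_contra hlt
    push_neg at hlt
    have hNle : N ≤ 4 * s := by omega
    set χN : Fin N → Fin N → Finset (Fin (2 * s)) :=
      fun i j => hadColoring s H (Fin.castLE hNle i) (Fin.castLE hNle j) with hχN
    have hcol : IsSetColoring N (2 * s) s χN := by
      constructor
      · intro i j; exact had_symm H _ _
      · intro i j hij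
        exact had_card H hent hH hs0 _ _ (fun h' => hij (Fin.castLE_injective hNle h'))
    have := hN χN hcol
    exact restrict_no_mono hNle (hadColoring s H) (had_no_mono H hent hH) this
  unfold setRamsey
  exact le_antisymm (Nat.sInf_le hmem) (le_csInf ⟨_, hmem⟩ hlow)
end
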